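/- arXiv:1907.05290 — 6 statements merged into one kernel-verified Lean document; each statement's English description precedes it below -/
import Mathlib

section
/- Let Φ(p) = ∫₀^∞ p/(p+t) dσ(t) for a Borel measure σ on [0,∞) with ∫₀^∞ (1+t)^{-1} dσ(t) < ∞, where σ is not the zero measure. Then Φ is strictly concave-adjacent in the sense that the inverse function p₀ : (0,∞) → (0,∞) of Φ (i.e., Φ(p₀(z)) = z) is strictly superadditive: p₀(x+y) > p₀(x) + p₀(y) for all x, y > 0. -/
open Set MeasureTheory

lemma aux_ae (σ : Measure ℝ) (hsupp : σ (Iio 0) = 0) : ∀ᵐ t ∂σ, 0 ≤ t := by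
  rw [ae_iff]
  convert hsupp using 2
  ext t; simp [not_le]

lemma aux_int (σ : Measure ℝ) (hsupp : σ (Iio 0) = 0)
    (hσint : Integrable (fun t => (1 + t)⁻¹) σ) {p : ℝ} (hp : 0 < p) :
    Integrable (fun t => p / (p + t)) σ := by
  have hae := aux_ae σ hsupp
  refine Integrable.mono' (hσint.const_mul (max 1 p))
    ((measurable_const.div (measurable_const.add measurable_id)).aestronglyMeasurable) ?_
  filter_upwards [hae] with t ht
  have h1 : 0 < p + t := by linarith
  have h2 : 0 < 1 + t := by linarith
  rw [Real.norm_eq_abs, abs_of_nonneg (div_nonneg hp.le h1.le)]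
  rw [div_le_iff₀ h1]
  have hm1 : (1:ℝ) ≤ max 1 p := le_max_left _ _
  have hm2 : p ≤ max 1 p := le_max_right _ _
  have : max 1 p * (1 + t)⁻¹ * (p + t) = max 1 p * (p + t) / (1 + t) := by ring
  rw [this, le_div_iff₀ h2]
  nlinarith

lemma aux_mono (σ : Measure ℝ) (hsupp : σ (Iio 0) = 0)
    (hσint : Integrable (fun t => (1 + t)⁻¹) σ) {p q : ℝ} (hp : 0 < p) (hpq : p ≤ q) :
    ∫ t, p / (p + t) ∂σ ≤ ∫ t, q / (q + t) ∂σ := by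
  refine integral_mono_ae (aux_int σ hsupp hσint hp) (aux_int σ hsupp hσint (lt_of_lt_of_le hp hpq)) ?_
  filter_upwards [aux_ae σ hsupp] with t ht
  have h1 : 0 < p + t := by linarith
  have h2 : 0 < q + t := by linarith
  rw [div_le_div_iff₀ h1 h2]
  nlinarith

/-- The inverse p₀ of a complete Bernstein function
Φ(p) = ∫₀^∞ p/(p+t) dσ(t) is strictly superadditive. -/
theorem stmt_2 (σ : Measure ℝ) (hsupp : σ (Iio 0) = 0)
    (hσint : Integrable (fun t => (1 + t)⁻¹) σ) (hσne : σ ≠ 0)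
    (Φ : ℝ → ℝ) (hΦ : ∀ p > 0, Φ p = ∫ t, p / (p + t) ∂σ)
    (p₀ : ℝ → ℝ) (hp₀ : ∀ z > 0, 0 < p₀ z ∧ Φ (p₀ z) = z) :
    ∀ x > 0, ∀ y > 0, p₀ (x + y) > p₀ x + p₀ y := by
  intro x hx y hy
  obtain ⟨ha, hΦa⟩ := hp₀ x hx
  obtain ⟨hb, hΦb⟩ := hp₀ y hy
  obtain ⟨hc, hΦc⟩ := hp₀ (x + y) (by linarith)
  set a := p₀ x with hA
  set b := p₀ y with hB
  set c := p₀ (x + y) with hC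
  have hab : 0 < a + b := by linarith
  -- strict subadditivity: Φ (a+b) < Φ a + Φ b
  have hInta := aux_int σ hsupp hσint ha
  have hIntb := aux_int σ hsupp hσint hb
  have hIntab := aux_int σ hsupp hσint hab
  have hkey : Φ (a + b) < Φ a + Φ b := by
    rw [hΦ a ha, hΦ b hb, hΦ (a + b) hab]
    have hpos : 0 < ∫ t, (a / (a + t) + b / (b + t) - (a + b) / (a + b + t)) ∂σ := by
      rw [integral_pos_iff_support_of_nonneg_ae]
      · -- support has positive measure
        have hsub : Ici (0:ℝ) ⊆ Function.support
            (fun t => a / (a + t) + b / (b + t) - (a + b) / (a + b + t)) := by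
          intro t ht
          have ht : (0:ℝ) ≤ t := ht
          have h1 : a / (a + b + t) < a / (a + t) :=
            div_lt_div_of_pos_left ha (by linarith) (by linarith)
          have h2 : b / (a + b + t) < b / (b + t) :=
            div_lt_div_of_pos_left hb (by linarith) (by linarith)
          have h3 : (a + b) / (a + b + t) = a / (a + b + t) + b / (a + b + t) :=
            add_div a b _
          simp only [Function.mem_support]
          intro hcontra
          nlinarith
        have huniv : σ univ ≠ 0 := by
          intro h0
          exact hσne (Measure.measure_univ_eq_zero.mp h0)
        have : σ (Ici (0:ℝ)) ≠ 0 := by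
          intro h0
          apply huniv
          have : σ univ ≤ σ (Iio 0) + σ (Ici 0) := by
            rw [← Iio_union_Ici (a := (0:ℝ))]
            exact measure_union_le _ _
          rw [hsupp, h0] at this
          exact le_antisymm (by simpa using this) zero_le
        calc 0 < σ (Ici 0) := pos_iff_ne_zero.mpr this
          _ ≤ _ := measure_mono hsub
      · -- a.e. nonneg
        filter_upwards [aux_ae σ hsupp] with t ht
        have h1 : a / (a + b + t) ≤ a / (a + t) :=
          (div_lt_div_of_pos_left ha (by linarith) (by linarith)).le
        have h2 : b / (a + b + t) ≤ b / (b + t) :=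
          (div_lt_div_of_pos_left hb (by linarith) (by linarith)).le
        have h3 : (a + b) / (a + b + t) = a / (a + b + t) + b / (a + b + t) :=
          add_div a b _
        simp only [Pi.zero_apply]
        nlinarith
      · exact ((hInta.add hIntb).sub hIntab)
    have heq : ∫ t, (a / (a + t) + b / (b + t) - (a + b) / (a + b + t)) ∂σ
        = (∫ t, a / (a + t) ∂σ) + (∫ t, b / (b + t) ∂σ) - ∫ t, (a + b) / (a + b + t) ∂σ := by
      have hIntsum : Integrable (fun t => a / (a + t) + b / (b + t)) σ := hInta.add hIntb
      rw [← integral_add hInta hIntb, ← integral_sub hIntsum hIntab]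
    rw [heq] at hpos
    linarith
  by_contra hcon
  push_neg at hcon
  have hmono : Φ c ≤ Φ (a + b) := by
    rw [hΦ c hc, hΦ (a + b) hab]
    exact aux_mono σ hsupp hσint hc hcon
  rw [hΦc] at hmono
  rw [hΦa, hΦb] at hkey
  linarith
end

section
/- Let Φ(p) = ∫₀^∞ p/(p+t) dσ(t) with ∫₀^∞ (1+t)^{-1} dσ(t) < ∞. Then for every p ∈ ℂ \ (-∞,0] with φ = arg p, one has √((1+cos φ)/2) · Φ(|p|) ≤ |Φ(p)| ≤ √(2/(1+cos φ)) · Φ(|p|). -/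
open Set MeasureTheory Complex

set_option maxHeartbeats 1000000 in
/-- Sector inequality for a complete Bernstein function Φ(p) = ∫₀^∞ p/(p+t) dσ(t):
for p off the negative real axis,
√((1+cos arg p)/2)·Φ(|p|) ≤ |Φ(p)| ≤ √(2/(1+cos arg p))·Φ(|p|). -/
theorem stmt_3 (σ : Measure ℝ) (hsupp : σ (Iio 0) = 0)
    (hσint : Integrable (fun t : ℝ => (1 + t)⁻¹) σ)
    (Φ : ℂ → ℂ) (hΦ : ∀ p : ℂ, p ∉ ((↑) '' Iic (0:ℝ) : Set ℂ) →
      Φ p = ∫ t : ℝ, p / (p + (t : ℂ)) ∂σ)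
    (Φℝ : ℝ → ℝ) (hΦℝ : ∀ x > 0, Φℝ x = ∫ t : ℝ, x / (x + t) ∂σ) :
    ∀ p : ℂ, p ∉ ((↑) '' Iic (0:ℝ) : Set ℂ) →
      Real.sqrt ((1 + Real.cos p.arg) / 2) * Φℝ (‖p‖) ≤ ‖Φ p‖ ∧
      ‖Φ p‖ ≤ Real.sqrt (2 / (1 + Real.cos p.arg)) * Φℝ (‖p‖) := by
  intro p hp
  have hp0 : p ≠ 0 := by
    rintro rfl
    exact hp ⟨0, by simp, by simp⟩
  set r : ℝ := ‖p‖ with hr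
  have hrpos : 0 < r := norm_pos_iff.mpr hp0
  set φ : ℝ := p.arg with hφ
  have hφgt : -Real.pi < φ := Complex.neg_pi_lt_arg p
  have hφlt : φ < Real.pi := by
    rcases lt_or_eq_of_le (Complex.arg_le_pi p) with h | h
    · exact h
    · exfalso
      rw [Complex.arg_eq_pi_iff] at h
      exact hp ⟨p.re, le_of_lt h.1, (Complex.ext rfl h.2.symm : (p.re : ℂ) = p)⟩
  set κ : ℝ := Real.cos (φ / 2) with hκ
  have hπ : 0 < Real.pi := Real.pi_pos
  have hκpos : 0 < κ := Real.cos_pos_of_mem_Ioo ⟨by linarith, by linarith⟩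
  have hκle : κ ≤ 1 := Real.cos_le_one _
  have hhalf : κ = Real.sqrt ((1 + Real.cos φ) / 2) :=
    Real.cos_half (by linarith) (by linarith)
  have hc : 1 + Real.cos φ = 2 * κ ^ 2 := by
    have h1 : κ ^ 2 = (1 + Real.cos φ) / 2 := by
      rw [hhalf, Real.sq_sqrt]
      nlinarith [Real.neg_one_le_cos φ]
    linarith
  have hsq2 : Real.sqrt (2 / (1 + Real.cos φ)) = κ⁻¹ := by
    rw [hc, show 2 / (2 * κ ^ 2) = (κ⁻¹) ^ 2 by field_simp,
      Real.sqrt_sq (by positivity)]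
  have hre : p.re = r * Real.cos φ := by
    rw [hφ, Complex.cos_arg hp0, ← hr]
    field_simp
  have hnsp : Complex.normSq p = r ^ 2 := by
    rw [← Complex.sq_norm, ← hr]
  have hae : ∀ᵐ t ∂σ, (0:ℝ) ≤ t := by
    rw [ae_iff]
    convert hsupp using 2
    ext t; simp [not_le]
  have hne : ∀ t : ℝ, 0 ≤ t → p + (t:ℂ) ≠ 0 := by
    intro t ht h
    refine hp ⟨-t, by simpa using ht, ?_⟩
    push_cast
    linear_combination -h
  have hns : ∀ t : ℝ, Complex.normSq (p + (t:ℂ)) =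
      r ^ 2 + 2 * (r * Real.cos φ) * t + t ^ 2 := by
    intro t
    have h := hnsp
    have h2 : 2 * t * p.re = 2 * t * (r * Real.cos φ) := by rw [hre]
    simp only [Complex.normSq_apply, Complex.add_re, Complex.add_im,
      Complex.ofReal_re, Complex.ofReal_im, add_zero] at h ⊢
    linear_combination h + h2
  have hkey : ∀ t : ℝ, 0 ≤ t →
      κ ^ 2 * (r + t) ^ 2 ≤ Complex.normSq (p + (t:ℂ)) ∧
      Complex.normSq (p + (t:ℂ)) ≤ (r + t) ^ 2 := by
    intro t ht
    rw [hns t]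
    have hcos : Real.cos φ = 2 * κ ^ 2 - 1 := by linarith
    have h2 : 2 * (r * Real.cos φ) * t = 2 * (r * (2 * κ ^ 2 - 1)) * t := by rw [hcos]
    have h3 : (0:ℝ) ≤ 1 - κ ^ 2 := by nlinarith
    constructor
    · nlinarith [h2, mul_nonneg h3 (sq_nonneg (r - t))]
    · nlinarith [h2, mul_nonneg (mul_nonneg h3 hrpos.le) ht, mul_nonneg hrpos.le ht,
        mul_nonneg (mul_nonneg (by nlinarith [Real.cos_le_one φ] : (0:ℝ) ≤ 1 - Real.cos φ) hrpos.le) ht]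
  have habs_low : ∀ t : ℝ, 0 ≤ t → κ * (r + t) ≤ ‖p + (t:ℂ)‖ := by
    intro t ht
    have h := (hkey t ht).1
    rw [← Complex.sq_norm] at h
    nlinarith [norm_nonneg (p + (t:ℂ)), hκpos, hrpos,
      mul_pos hκpos (by linarith : (0:ℝ) < r + t)]
  -- pointwise upper bound of |p/(p+t)|
  have hupp : ∀ t : ℝ, 0 ≤ t →
      ‖p / (p + (t:ℂ))‖ ≤ κ⁻¹ * (r / (r + t)) := by
    intro t ht
    have hrt : 0 < r + t := by linarith
    have h1 : 0 < ‖p + (t:ℂ)‖ :=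
      lt_of_lt_of_le (by positivity) (habs_low t ht)
    rw [norm_div, ← hr, div_le_iff₀ h1]
    calc r = κ⁻¹ * (r / (r + t)) * (κ * (r + t)) := by field_simp
    _ ≤ κ⁻¹ * (r / (r + t)) * ‖p + (t:ℂ)‖ := by
        apply mul_le_mul_of_nonneg_left (habs_low t ht)
        positivity
  -- rotation
  set q : ℂ := Complex.exp ((↑(-(φ / 2)) : ℂ) * Complex.I) with hq
  have hqabs : ‖q‖ = 1 := Complex.norm_exp_ofReal_mul_I _
  have hqre : q.re = κ := by
    rw [hq, Complex.exp_ofReal_mul_I_re, Real.cos_neg]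
  have hqp : q * p = (r : ℂ) * Complex.exp ((↑(φ / 2) : ℂ) * Complex.I) := by
    have harg : (↑(-(φ / 2)) : ℂ) * Complex.I + (↑φ : ℂ) * Complex.I
        = (↑(φ / 2) : ℂ) * Complex.I := by push_cast; ring
    conv_lhs => rw [← Complex.norm_mul_exp_arg_mul_I p]
    rw [← hr, ← hφ, hq, mul_left_comm, ← Complex.exp_add, harg]
  have hqpre : (q * p).re = r * κ := by
    rw [hqp, Complex.re_ofReal_mul, Complex.exp_ofReal_mul_I_re]
  -- pointwise lower bound for the real part
  have hlow : ∀ t : ℝ, 0 ≤ t →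
      κ * (r / (r + t)) ≤ (q * (p / (p + (t:ℂ)))).re := by
    intro t ht
    have hrt : 0 < r + t := by linarith
    have hw : p + (t:ℂ) ≠ 0 := hne t ht
    have hnpos : 0 < Complex.normSq (p + (t:ℂ)) := Complex.normSq_pos.mpr hw
    have hconj : (starRingEnd ℂ) (p + (t:ℂ)) ≠ 0 := by
      intro h
      exact hw (by simpa using congrArg (starRingEnd ℂ) h)
    have hrw : q * (p / (p + (t:ℂ)))
        = q * p * (starRingEnd ℂ) (p + (t:ℂ)) / (Complex.normSq (p + (t:ℂ)) : ℂ) := by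
      rw [← Complex.mul_conj (p + (t:ℂ))]
      rw [mul_div_mul_right _ _ hconj, mul_div_assoc]
    have hnum : (q * p * (starRingEnd ℂ) (p + (t:ℂ))).re = κ * (r * (r + t)) := by
      have h1 : q * p * (starRingEnd ℂ) (p + (t:ℂ))
          = ((r ^ 2 : ℝ) : ℂ) * q + ((t : ℂ)) * (q * p) := by
        rw [map_add, Complex.conj_ofReal]
        have h2 : p * (starRingEnd ℂ) p = ((r ^ 2 : ℝ) : ℂ) := by
          rw [Complex.mul_conj, hnsp]
        calc q * p * ((starRingEnd ℂ) p + (t:ℂ))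
            = q * (p * (starRingEnd ℂ) p) + (t:ℂ) * (q * p) := by ring
          _ = ((r ^ 2 : ℝ) : ℂ) * q + (t:ℂ) * (q * p) := by rw [h2]; ring
      rw [h1, Complex.add_re, Complex.re_ofReal_mul, Complex.re_ofReal_mul, hqre, hqpre]
      ring
    rw [hrw, Complex.div_ofReal_re, hnum]
    have hle : Complex.normSq (p + (t:ℂ)) ≤ (r + t) ^ 2 := (hkey t ht).2
    have h3 : κ * (r * (r + t)) / ((r + t) ^ 2) ≤
        κ * (r * (r + t)) / Complex.normSq (p + (t:ℂ)) :=
      div_le_div_of_nonneg_left (by positivity) hnpos hle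
    calc κ * (r / (r + t)) = κ * (r * (r + t)) / ((r + t) ^ 2) := by
          field_simp
    _ ≤ _ := h3
  -- integrability
  have hg_meas : AEStronglyMeasurable (fun t : ℝ => r / (r + t)) σ :=
    (measurable_const.div (measurable_const.add measurable_id)).aestronglyMeasurable
  have hbd : ∀ t : ℝ, 0 ≤ t → r / (r + t) ≤ max 1 r * (1 + t)⁻¹ := by
    intro t ht
    have hrt : 0 < r + t := by linarith
    have h1t : 0 < 1 + t := by linarith
    rw [← div_eq_mul_inv, div_le_div_iff₀ hrt h1t]
    have hA : r ≤ max 1 r * r := le_mul_of_one_le_left hrpos.le (le_max_left 1 r)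
    have hB : r * t ≤ max 1 r * t := mul_le_mul_of_nonneg_right (le_max_right 1 r) ht
    nlinarith [hA, hB]
  have hg : Integrable (fun t : ℝ => r / (r + t)) σ := by
    refine Integrable.mono' (hσint.const_mul (max 1 r)) hg_meas ?_
    filter_upwards [hae] with t ht
    have hrt : 0 < r + t := by linarith
    rw [Real.norm_of_nonneg (by positivity)]
    exact hbd t ht
  have hf_meas : AEStronglyMeasurable (fun t : ℝ => p / (p + (t:ℂ))) σ :=
    (measurable_const.div (measurable_const.add Complex.measurable_ofReal)).aestronglyMeasurable
  have hf : Integrable (fun t : ℝ => p / (p + (t:ℂ))) σ := by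
    refine Integrable.mono' ((hσint.const_mul (max 1 r)).const_mul κ⁻¹) hf_meas ?_
    filter_upwards [hae] with t ht
    calc ‖p / (p + (t:ℂ))‖ ≤ κ⁻¹ * (r / (r + t)) := hupp t ht
    _ ≤ κ⁻¹ * (max 1 r * (1 + t)⁻¹) := by
        apply mul_le_mul_of_nonneg_left (hbd t ht) (by positivity)
  -- assemble
  rw [hΦ p hp, hΦℝ r hrpos, ← hhalf, hsq2]
  have hIg : ∫ t : ℝ, (r:ℝ) / (r + t) ∂σ = ∫ t : ℝ, r / (r + t) ∂σ := rfl
  constructor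
  · -- lower bound
    have step1 : κ * ∫ t : ℝ, r / (r + t) ∂σ
        = ∫ t : ℝ, κ * (r / (r + t)) ∂σ := (integral_const_mul κ _).symm
    have step2 : ∫ t : ℝ, κ * (r / (r + t)) ∂σ
        ≤ ∫ t : ℝ, (q * (p / (p + (t:ℂ)))).re ∂σ := by
      refine integral_mono_ae (hg.const_mul κ) ((hf.const_mul q).re) ?_
      filter_upwards [hae] with t ht
      exact hlow t ht
    have step3 : ∫ t : ℝ, (q * (p / (p + (t:ℂ)))).re ∂σ
        = (q * ∫ t : ℝ, p / (p + (t:ℂ)) ∂σ).re := by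
      rw [← integral_const_mul q]
      exact integral_re (hf.const_mul q)
    have step4 : (q * ∫ t : ℝ, p / (p + (t:ℂ)) ∂σ).re
        ≤ ‖∫ t : ℝ, p / (p + (t:ℂ)) ∂σ‖ := by
      calc (q * ∫ t : ℝ, p / (p + (t:ℂ)) ∂σ).re
          ≤ ‖q * ∫ t : ℝ, p / (p + (t:ℂ)) ∂σ‖ := Complex.re_le_norm _
      _ = ‖∫ t : ℝ, p / (p + (t:ℂ)) ∂σ‖ := by
          rw [norm_mul, hqabs, one_mul]
    calc κ * ∫ t : ℝ, r / (r + t) ∂σ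
        = ∫ t : ℝ, κ * (r / (r + t)) ∂σ := step1
    _ ≤ ∫ t : ℝ, (q * (p / (p + (t:ℂ)))).re ∂σ := step2
    _ = (q * ∫ t : ℝ, p / (p + (t:ℂ)) ∂σ).re := step3
    _ ≤ _ := step4
  · -- upper bound
    calc ‖∫ t : ℝ, p / (p + (t:ℂ)) ∂σ‖
        = ‖∫ t : ℝ, p / (p + (t:ℂ)) ∂σ‖ := rfl
    _ ≤ ∫ t : ℝ, ‖p / (p + (t:ℂ))‖ ∂σ := norm_integral_le_integral_norm _
    _ ≤ ∫ t : ℝ, κ⁻¹ * (r / (r + t)) ∂σ := by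
          refine integral_mono_ae hf.norm (hg.const_mul κ⁻¹) ?_
          filter_upwards [hae] with t ht
          exact hupp t ht
    _ = κ⁻¹ * ∫ t : ℝ, r / (r + t) ∂σ := integral_const_mul κ⁻¹ _
end

section
/- Let μ ∈ C²([0,1]) with μ(1) ≠ 0, and define Φ(p) = ∫₀¹ p^α μ(α) dα for p > 0. Then Φ(p) = μ(1)·p/log p + O(p·(log p)^{-2}) as p → ∞. -/
open Set MeasureTheory Real Filter Asymptotics intervalIntegral

theorem exp_int_aux (L : ℝ) (hL : 0 < L) :
    ∫ α in (0:ℝ)..1, Real.exp (L * α) = (Real.exp L - 1)/L := by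
  have h : ∀ x ∈ uIcc (0:ℝ) 1, HasDerivAt (fun a => Real.exp (L*a)/L) (Real.exp (L*x)) x := by
    intro x _
    have := ((hasDerivAt_id x).const_mul L).exp
    simpa [mul_comm, mul_div_assoc, ne_of_gt hL] using this.div_const L
  rw [integral_eq_sub_of_hasDerivAt h]
  · field_simp
    simp only [mul_zero, exp_zero]
  · exact (Real.continuous_exp.comp (continuous_const.mul continuous_id)).intervalIntegrable 0 1

theorem exp_int2_aux (L : ℝ) (hL : 0 < L) :
    ∫ α in (0:ℝ)..1, Real.exp (L * α) * (1 - α) = Real.exp L / L^2 - (1/L + 1/L^2) := by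
  have h : ∀ x ∈ uIcc (0:ℝ) 1, HasDerivAt
      (fun a => Real.exp (L*a) * ((1-a)/L + 1/L^2)) (Real.exp (L*x) * (1-x)) x := by
    intro x _
    have h1 : HasDerivAt (fun a => Real.exp (L*a)) (L * Real.exp (L*x)) x := by
      simpa [mul_comm] using ((hasDerivAt_id x).const_mul L).exp
    have h2 : HasDerivAt (fun a : ℝ => (1-a)/L + 1/L^2) (-1/L) x := by
      have h3 : HasDerivAt (fun a : ℝ => (1-a)) (-1) x := by
        simpa using (hasDerivAt_id x).const_sub 1
      have := (h3.div_const L).add_const (1/L^2)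
      convert this using 2
    have := h1.mul h2
    simp only [Pi.mul_def] at this
    refine this.congr_deriv ?_
    field_simp
    ring
  rw [integral_eq_sub_of_hasDerivAt h]
  · field_simp
    simp only [sub_self, mul_zero, zero_add, exp_zero, sub_zero, mul_one, one_mul]
  · apply Continuous.intervalIntegrable
    exact (Real.continuous_exp.comp (continuous_const.mul continuous_id)).mul
      (continuous_const.sub continuous_id)

/-- For μ ∈ C²([0,1]) with μ(1) ≠ 0 and Φ(p) = ∫₀¹ p^α μ(α) dα, one has
Φ(p) = μ(1)·p/log p + O(p (log p)^{-2}) as p → ∞. -/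
theorem stmt_9 (μ : ℝ → ℝ) (hμ : ContDiffOn ℝ 2 μ (Icc 0 1)) (hμ1 : μ 1 ≠ 0)
    (Φ : ℝ → ℝ) (hΦ : ∀ p > 0, Φ p = ∫ α in (0:ℝ)..1, p ^ α * μ α) :
    (fun p => Φ p - μ 1 * p / Real.log p) =O[atTop]
      (fun p => p * (Real.log p)⁻¹ ^ 2) := by
  -- Lipschitz bound for μ on [0,1]
  have hμc : ContinuousOn μ (Icc 0 1) := hμ.continuousOn
  have hμ1' : ContDiffOn ℝ 1 μ (Icc 0 1) := hμ.of_le one_le_two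
  have hd : ContinuousOn (derivWithin μ (Icc 0 1)) (Icc 0 1) :=
    hμ.continuousOn_derivWithin (uniqueDiffOn_Icc zero_lt_one) one_le_two
  obtain ⟨C, hC⟩ := (isCompact_Icc (a := (0:ℝ)) (b := 1)).exists_bound_of_continuousOn hd
  set K : ℝ := max C 0 with hKdef
  have hK0 : 0 ≤ K := le_max_right _ _
  have hlip : ∀ α ∈ Icc (0:ℝ) 1, |μ α - μ 1| ≤ K * (1 - α) := by
    intro α hα
    have h1 : (1:ℝ) ∈ Icc (0:ℝ) 1 := by norm_num
    have := (convex_Icc (0:ℝ) 1).norm_image_sub_le_of_norm_derivWithin_le (C := K)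
      (hμ1'.differentiableOn one_ne_zero)
      (fun x hx => le_trans (hC x hx) (le_max_left _ _)) h1 hα
    calc |μ α - μ 1| = ‖μ α - μ 1‖ := rfl
      _ ≤ K * ‖α - 1‖ := this
      _ = K * (1 - α) := by
          rw [Real.norm_eq_abs, abs_sub_comm, abs_of_nonneg (by linarith [hα.2])]
  rw [isBigO_iff]
  refine ⟨K + |μ 1|, ?_⟩
  filter_upwards [eventually_ge_atTop (Real.exp 1)] with p hp
  have hp0 : 0 < p := lt_of_lt_of_le (Real.exp_pos 1) hp
  set L : ℝ := Real.log p with hLdef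
  have hL1 : 1 ≤ L := (Real.le_log_iff_exp_le hp0).2 hp
  have hL0 : 0 < L := lt_of_lt_of_le one_pos hL1
  have hLp : L ≤ p := le_trans (Real.log_le_sub_one_of_pos hp0) (by linarith)
  have hexpL : Real.exp L = p := Real.exp_log hp0
  -- integrability facts
  have hcexp : Continuous fun α : ℝ => Real.exp (L * α) :=
    Real.continuous_exp.comp (continuous_const.mul continuous_id)
  have hint1 : IntervalIntegrable (fun α => Real.exp (L*α) * μ 1) volume 0 1 :=
    (hcexp.mul continuous_const).intervalIntegrable 0 1
  have hμcu : ContinuousOn μ (uIcc (0:ℝ) 1) := by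
    rwa [uIcc_of_le (by norm_num : (0:ℝ) ≤ 1)]
  have hint2 : IntervalIntegrable (fun α => Real.exp (L*α) * (μ α - μ 1)) volume 0 1 := by
    apply ContinuousOn.intervalIntegrable
    exact hcexp.continuousOn.mul (hμcu.sub continuousOn_const)
  -- decompose the integral
  have hdecomp : Φ p = (∫ α in (0:ℝ)..1, Real.exp (L*α) * μ 1)
      + ∫ α in (0:ℝ)..1, Real.exp (L*α) * (μ α - μ 1) := by
    rw [hΦ p hp0, ← intervalIntegral.integral_add hint1 hint2]
    apply intervalIntegral.integral_congr
    intro α _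
    show p ^ α * μ α = Real.exp (L*α) * μ 1 + Real.exp (L*α) * (μ α - μ 1)
    rw [Real.rpow_def_of_pos hp0]
    ring
  have hI1 : (∫ α in (0:ℝ)..1, Real.exp (L*α) * μ 1) = μ 1 * (p - 1) / L := by
    rw [intervalIntegral.integral_mul_const, exp_int_aux L hL0, hexpL]
    ring
  -- bound the error integral
  set E : ℝ := ∫ α in (0:ℝ)..1, Real.exp (L*α) * (μ α - μ 1) with hEdef
  have hEbound : |E| ≤ K * p / L^2 := by
    have habs : |E| ≤ ∫ α in (0:ℝ)..1, |Real.exp (L*α) * (μ α - μ 1)| := by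
      exact intervalIntegral.abs_integral_le_integral_abs (by norm_num)
    have hmono : (∫ α in (0:ℝ)..1, |Real.exp (L*α) * (μ α - μ 1)|)
        ≤ ∫ α in (0:ℝ)..1, Real.exp (L*α) * (K * (1 - α)) := by
      apply intervalIntegral.integral_mono_on (by norm_num)
      · exact hint2.abs
      · exact (hcexp.mul ((continuous_const.mul
          (continuous_const.sub continuous_id)))).intervalIntegrable 0 1
      · intro x hx
        rw [abs_mul, abs_of_pos (Real.exp_pos _)]
        exact mul_le_mul_of_nonneg_left (hlip x hx) (Real.exp_pos _).le
    have hval : (∫ α in (0:ℝ)..1, Real.exp (L*α) * (K * (1 - α)))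
        = K * (Real.exp L / L^2 - (1/L + 1/L^2)) := by
      rw [← exp_int2_aux L hL0, ← intervalIntegral.integral_const_mul]
      apply intervalIntegral.integral_congr
      intro α _; ring
    have hle : K * (Real.exp L / L^2 - (1/L + 1/L^2)) ≤ K * p / L^2 := by
      rw [hexpL]
      have h1 : 0 ≤ 1/L + 1/L^2 := by positivity
      calc K * (p / L^2 - (1/L + 1/L^2)) ≤ K * (p / L^2) :=
            mul_le_mul_of_nonneg_left (by linarith) hK0
        _ = K * p / L^2 := by ring
    calc |E| ≤ _ := habs
      _ ≤ _ := hmono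
      _ = _ := hval
      _ ≤ _ := hle
  -- conclude
  have hmain : Φ p - μ 1 * p / L = E - μ 1 / L := by
    rw [hdecomp, hI1]
    field_simp
    ring
  rw [Real.norm_eq_abs, Real.norm_eq_abs, hmain]
  have hrhs : |p * (L⁻¹)^2| = p / L^2 := by
    rw [abs_of_pos (by positivity)]
    field_simp
  rw [hrhs]
  have h2 : |μ 1 / L| ≤ |μ 1| * p / L^2 := by
    rw [abs_div, abs_of_pos hL0]
    rw [div_le_div_iff₀ hL0 (by positivity)]
    calc |μ 1| * L^2 = |μ 1| * L * L := by ring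
      _ ≤ |μ 1| * p * L := by
          apply mul_le_mul_of_nonneg_right _ hL0.le
          exact mul_le_mul_of_nonneg_left hLp (abs_nonneg _)
  calc |E - μ 1 / L| ≤ |E| + |μ 1 / L| := abs_sub _ _
    _ ≤ K * p / L^2 + |μ 1| * p / L^2 := add_le_add hEbound h2
    _ = (K + |μ 1|) * (p / L^2) := by ring
end

section
/- Let μ ∈ C²([0,1]) with μ(1) ≠ 0 and μ ≥ 0, μ not identically zero, and Φ(p) = ∫₀¹ p^α μ(α) dα. Then ∫₁^∞ ds/(s·Φ(s)) < ∞. -/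
/-! Near `α = 1` the weight satisfies `μ ≥ μ(1)/2 > 0` on some `[l, 1]` with `0 < l < 1`, so for
`s ≥ 1` one gets `Φ(s) ≥ (1 - l) μ(1)/2 · s^l`. Hence `1/(s Φ(s)) = O(s^{-(1+l)})`, which is
integrable on `(1, ∞)`. Measurability comes for free because `Φ` is monotone. -/

open Set MeasureTheory Real Filter Topology

lemma exists_mem_Ioo_forall_Icc_lt_of_continuousWithinAt {f : ℝ → ℝ} {a b m : ℝ} (hab : a < b)
    (hf : ContinuousWithinAt f (Icc a b) b) (hm : m < f b) :
    ∃ l ∈ Ioo a b, ∀ x ∈ Icc l b, m < f x := by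
  have hnhds : {x | m < f x} ∈ 𝓝[≤] b := nhdsWithin_Icc_eq_nhdsLE hab ▸ hf (Ioi_mem_nhds hm)
  obtain ⟨l, hlb, hl⟩ := mem_nhdsLE_iff_exists_Icc_subset.1 hnhds
  exact ⟨max ((a + b) / 2) l, ⟨by linarith [le_max_left ((a + b) / 2) l], max_lt (by linarith) hlb⟩,
    fun x hx => hl ⟨(le_max_right _ _).trans hx.1, hx.2⟩⟩

section

variable {μ : ℝ → ℝ}

lemma intervalIntegrable_rpow_mul (hμ : ContinuousOn μ (Icc 0 1)) {s : ℝ} (hs : 0 < s) :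
    IntervalIntegrable (fun α => s ^ α * μ α) volume 0 1 :=
  ((continuous_const_rpow hs.ne').continuousOn.mul hμ).intervalIntegrable_of_Icc zero_le_one

lemma monotoneOn_integral_rpow_mul (hμ : ContinuousOn μ (Icc 0 1))
    (hμ0 : ∀ α ∈ Icc (0:ℝ) 1, 0 ≤ μ α) :
    MonotoneOn (fun s : ℝ => ∫ α in (0:ℝ)..1, s ^ α * μ α) (Ioi 0) :=
  fun _ hs _ ht hst =>
    intervalIntegral.integral_mono_on zero_le_one (intervalIntegrable_rpow_mul hμ hs)
      (intervalIntegrable_rpow_mul hμ ht)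
      fun α hα => mul_le_mul_of_nonneg_right (rpow_le_rpow hs.le hst hα.1) (hμ0 α hα)

lemma exists_rpow_le_integral_rpow_mul (hμ : ContinuousOn μ (Icc 0 1))
    (hμ0 : ∀ α ∈ Icc (0:ℝ) 1, 0 ≤ μ α) (hμ1 : 0 < μ 1) :
    ∃ c > 0, ∃ β : ℝ, 0 < β ∧ ∀ s ≥ 1, c * s ^ β ≤ ∫ α in (0:ℝ)..1, s ^ α * μ α := by
  obtain ⟨l, ⟨hl0, hl1⟩, hl⟩ := exists_mem_Ioo_forall_Icc_lt_of_continuousWithinAt one_pos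
    (hμ 1 ⟨zero_le_one, le_rfl⟩) (half_lt_self hμ1)
  refine ⟨(1 - l) * (μ 1 / 2), by nlinarith, l, hl0, fun s hs => ?_⟩
  have hint := intervalIntegrable_rpow_mul hμ (one_pos.trans_le hs)
  calc (1 - l) * (μ 1 / 2) * s ^ l = ∫ _ in l..1, s ^ l * (μ 1 / 2) := by
        rw [intervalIntegral.integral_const, smul_eq_mul]; ring
    _ ≤ ∫ α in l..1, s ^ α * μ α := by
        refine intervalIntegral.integral_mono_on hl1.le intervalIntegrable_const
          (hint.mono_set ?_) fun α hα => ?_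
        · rw [uIcc_of_le hl1.le, uIcc_of_le zero_le_one]
          exact Icc_subset_Icc hl0.le le_rfl
        · exact mul_le_mul (rpow_le_rpow_of_exponent_le hs hα.1) (hl α hα).le (by linarith)
            (by positivity)
    _ ≤ ∫ α in (0:ℝ)..1, s ^ α * μ α :=
        intervalIntegral.integral_mono_interval hl0.le hl1.le le_rfl
          ((ae_restrict_mem measurableSet_Ioc).mono fun α hα =>
            mul_nonneg (by positivity) (hμ0 α (Ioc_subset_Icc_self hα))) hint

end

lemma integrableOn_Ioi_inv_of_mul_rpow_le {f : ℝ → ℝ} {a c r : ℝ} (ha : 0 < a) (hc : 0 < c)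
    (hr : 1 < r) (hf : AEMeasurable f (volume.restrict (Ioi a)))
    (hbound : ∀ s > a, c * s ^ r ≤ f s) :
    IntegrableOn (fun s => (f s)⁻¹) (Ioi a) := by
  refine ((integrableOn_Ioi_rpow_of_lt (neg_lt_neg hr) ha).const_mul c⁻¹).mono'
    hf.inv.aestronglyMeasurable ?_
  filter_upwards [ae_restrict_mem measurableSet_Ioi] with s hs
  have hpos : 0 < c * s ^ r := by have : 0 < s := ha.trans hs; positivity
  rw [norm_inv, norm_of_nonneg (hpos.trans_le (hbound s hs)).le]
  calc (f s)⁻¹ ≤ (c * s ^ r)⁻¹ := inv_anti₀ hpos (hbound s hs)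
    _ = c⁻¹ * s ^ (-r) := by rw [mul_inv, rpow_neg (ha.trans hs).le]

theorem stmt_10_general (μ : ℝ → ℝ) (hμ : ContDiffOn ℝ 2 μ (Icc 0 1)) (hμ1 : μ 1 ≠ 0)
    (hμpos : ∀ α ∈ Icc (0:ℝ) 1, 0 ≤ μ α)
    (Φ : ℝ → ℝ) (hΦ : ∀ p > 0, Φ p = ∫ α in (0:ℝ)..1, p ^ α * μ α) :
    IntegrableOn (fun s : ℝ => (s * Φ s)⁻¹) (Ioi 1) := by
  have hμc := hμ.continuousOn
  have hμ1pos : 0 < μ 1 := (hμpos 1 ⟨zero_le_one, le_rfl⟩).lt_of_ne' hμ1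
  obtain ⟨c, hc, β, hβ, hlow⟩ := exists_rpow_le_integral_rpow_mul hμc hμpos hμ1pos
  have hΦmono : MonotoneOn Φ (Ioi 1) := fun s hs t ht hst => by
    have hs0 : 0 < s := one_pos.trans hs
    have ht0 : 0 < t := one_pos.trans ht
    rw [hΦ s hs0, hΦ t ht0]
    exact monotoneOn_integral_rpow_mul hμc hμpos hs0 ht0 hst
  refine integrableOn_Ioi_inv_of_mul_rpow_le one_pos hc (lt_add_of_pos_right 1 hβ)
    (aemeasurable_id.mul (aemeasurable_restrict_of_monotoneOn measurableSet_Ioi hΦmono))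
    fun s hs => ?_
  have hs0 : 0 < s := one_pos.trans hs
  calc c * s ^ (1 + β) = s * (c * s ^ β) := by rw [rpow_add hs0, rpow_one]; ring
    _ ≤ s * Φ s := mul_le_mul_of_nonneg_left (hΦ s hs0 ▸ hlow s hs.le) hs0.le

/-- For μ ∈ C²([0,1]) with μ(1) ≠ 0, μ ≥ 0 and μ not identically zero, the symbol
Φ(p) = ∫₀¹ p^α μ(α) dα of the distributed order derivative satisfies
∫₁^∞ ds/(s Φ(s)) < ∞. -/
theorem stmt_10 (μ : ℝ → ℝ) (hμ : ContDiffOn ℝ 2 μ (Icc 0 1)) (hμ1 : μ 1 ≠ 0)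
    (hμpos : ∀ α ∈ Icc (0:ℝ) 1, 0 ≤ μ α) (hμne : ∃ α ∈ Icc (0:ℝ) 1, μ α ≠ 0)
    (Φ : ℝ → ℝ) (hΦ : ∀ p > 0, Φ p = ∫ α in (0:ℝ)..1, p ^ α * μ α) :
    IntegrableOn (fun s : ℝ => (s * Φ s)⁻¹) (Ioi 1) :=
  stmt_10_general μ hμ hμ1 hμpos Φ hΦ
end

section
/- Let 𝒦(p) = ∫₀^∞ (p+t)^{-1} dσ(t) with ∫₀^∞ (1+t)^{-1} dσ(t) < ∞ and σ ≠ 0, and suppose Φ(p) = p𝒦(p) → ∞ as p → ∞ and Φ(p) → 0 as p → 0+. Let λ > 0 and p₀ > 0 with Φ(p₀) = λ. Then the function p ↦ 𝒦(p)/(Φ(p) − λ) is holomorphic on the sector p₀ + Σ_{ρ+π/2} = { p₀ + re^{iθ} : r > 0, |θ| < ρ + π/2 } for every 0 < ρ < π/2, and sup over that sector of |(p − p₀)·𝒦(p)/(Φ(p) − λ)| is finite. -/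
open Set MeasureTheory Complex Filter Metric

namespace Stmt11

noncomputable def _root_.Complex.abs : AbsoluteValue ℂ ℝ where
  toFun z := ‖z‖
  map_mul' := norm_mul
  nonneg' := norm_nonneg
  eq_zero' _ := norm_eq_zero
  add_le' := norm_add_le

lemma _root_.Complex.norm_eq_abs (z : ℂ) : ‖z‖ = Complex.abs z := rfl

@[simp] lemma _root_.Complex.abs_ofReal (r : ℝ) : Complex.abs (r : ℂ) = |r| :=
  (Complex.norm_real r).trans (Real.norm_eq_abs r)

@[simp] lemma _root_.Complex.abs_exp_ofReal_mul_I (x : ℝ) : Complex.abs (Complex.exp (x * I)) = 1 :=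
  Complex.norm_exp_ofReal_mul_I x

lemma _root_.Complex.abs_apply (z : ℂ) : Complex.abs z = Real.sqrt (Complex.normSq z) :=
  Complex.norm_def z

lemma _root_.Complex.abs_im_le_abs (z : ℂ) : |z.im| ≤ Complex.abs z := Complex.abs_im_le_norm z

lemma _root_.Complex.re_le_abs (z : ℂ) : z.re ≤ Complex.abs z := Complex.re_le_norm z

lemma _root_.Complex.sq_abs (z : ℂ) : Complex.abs z ^ 2 = Complex.normSq z := Complex.sq_norm z

lemma _root_.Complex.continuous_abs : Continuous Complex.abs := continuous_norm

lemma _root_.Complex.abs_mul_exp_arg_mul_I (x : ℂ) :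
    ((Complex.abs x : ℝ) : ℂ) * Complex.exp ((x.arg : ℂ) * I) = x :=
  Complex.norm_mul_exp_arg_mul_I x

lemma mem_cut_iff (p : ℂ) : p ∉ ((↑) '' Iic (0:ℝ) : Set ℂ) ↔ (p.im ≠ 0 ∨ 0 < p.re) := by
  constructor
  · intro h
    by_contra hc
    push_neg at hc
    exact h ⟨p.re, by simpa using hc.2, by simp [Complex.ext_iff, hc.1]⟩
  · rintro h ⟨x, hx, rfl⟩
    simp only [Complex.ofReal_im, Complex.ofReal_re] at h
    rcases h with h | h
    · exact h rfl
    · exact absurd hx (not_le.2 h)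

lemma lower_bound {p : ℂ} (hp : p.im ≠ 0 ∨ 0 < p.re) :
    ∃ c : ℝ, 0 < c ∧ ∀ t : ℝ, 0 ≤ t → c * (1 + t) ≤ Complex.abs (p + t) := by
  obtain ⟨d, hd, hdle⟩ : ∃ d : ℝ, 0 < d ∧ ∀ t : ℝ, 0 ≤ t → d ≤ Complex.abs (p + t) := by
    rcases hp with h | h
    · refine ⟨|p.im|, abs_pos.2 h, fun t ht => ?_⟩
      have h1 : (p + (t:ℂ)).im = p.im := by simp
      have := Complex.abs_im_le_abs (p + t)
      rwa [h1] at this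
    · refine ⟨p.re, h, fun t ht => ?_⟩
      have h1 : (p + (t:ℂ)).re = p.re + t := by simp
      have := Complex.re_le_abs (p + t)
      rw [h1] at this; linarith
  have habs : (0:ℝ) ≤ Complex.abs p := AbsoluteValue.nonneg _ _
  refine ⟨min (d / (2 + 2 * Complex.abs p)) (1/2),
    lt_min (div_pos hd (by positivity)) one_half_pos, fun t ht => ?_⟩
  rcases le_total t (1 + 2 * Complex.abs p) with h | h
  · calc min (d / (2 + 2 * Complex.abs p)) (1/2) * (1+t)
        ≤ (d / (2 + 2*Complex.abs p)) * (1 + t) :=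
          mul_le_mul_of_nonneg_right (min_le_left _ _) (by linarith)
      _ ≤ d := by
          rw [div_mul_eq_mul_div, div_le_iff₀ (by positivity)]
          nlinarith
      _ ≤ Complex.abs (p + t) := hdle t ht
  · have h2 : t ≤ Complex.abs (p + t) + Complex.abs p := by
      have h3 := Complex.abs.add_le (p + t) (-p)
      rw [add_neg_cancel_comm, Complex.abs_ofReal, Complex.abs.map_neg] at h3
      calc t ≤ |t| := le_abs_self t
        _ ≤ _ := h3
    calc min (d / (2 + 2 * Complex.abs p)) (1/2) * (1+t)
        ≤ (1/2) * (1+t) := mul_le_mul_of_nonneg_right (min_le_right _ _) (by linarith)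
      _ ≤ Complex.abs (p+t) := by linarith

lemma ae_nonneg {σ : Measure ℝ} (hsupp : σ (Iio 0) = 0) : ∀ᵐ t ∂σ, 0 ≤ t := by
  rw [ae_iff]
  simp only [not_le]; exact hsupp

lemma integrable_inv {σ : Measure ℝ} (hsupp : σ (Iio 0) = 0)
    (hσint : Integrable (fun t : ℝ => (1 + t)⁻¹) σ) {p : ℂ} (hp : p.im ≠ 0 ∨ 0 < p.re) :
    Integrable (fun t : ℝ => (p + (t:ℂ))⁻¹) σ := by
  obtain ⟨c, hc, hcle⟩ := lower_bound hp
  have hmeas : AEStronglyMeasurable (fun t : ℝ => (p + (t:ℂ))⁻¹) σ := by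
    apply Measurable.aestronglyMeasurable
    exact (measurable_const.add Complex.measurable_ofReal).inv
  refine (hσint.const_mul (c⁻¹)).mono' hmeas ?_
  filter_upwards [ae_nonneg hsupp] with t ht
  have h1 : 0 < c * (1 + t) := by positivity
  have h2 := hcle t ht
  rw [Complex.norm_eq_abs, map_inv₀, ← mul_inv]
  exact inv_anti₀ h1 h2

lemma integral_pos {σ : Measure ℝ} (hsupp : σ (Iio 0) = 0) (hne : σ (Ioi 0) ≠ 0)
    {f : ℝ → ℝ} (hf : Integrable f σ) (h0 : ∀ᵐ t ∂σ, 0 ≤ f t)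
    (hpos : ∀ t : ℝ, 0 < t → 0 < f t) : 0 < ∫ t, f t ∂σ := by
  rw [MeasureTheory.integral_pos_iff_support_of_nonneg_ae h0 hf]
  refine lt_of_lt_of_le ?_ (measure_mono (fun t ht => ne_of_gt (hpos t ht)))
  exact lt_of_le_of_ne zero_le (Ne.symm hne)

lemma hasDerivAt_K {σ : Measure ℝ} (hsupp : σ (Iio 0) = 0)
    (hσint : Integrable (fun t : ℝ => (1 + t)⁻¹) σ) {p : ℂ} (hp : p.im ≠ 0 ∨ 0 < p.re) :
    Integrable (fun t : ℝ => -(((p + (t:ℂ))^2)⁻¹)) σ ∧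
    HasDerivAt (fun q : ℂ => ∫ t : ℝ, (q + (t:ℂ))⁻¹ ∂σ)
      (∫ t : ℝ, -(((p + (t:ℂ))^2)⁻¹) ∂σ) p := by
  obtain ⟨c, hc, hcle⟩ := lower_bound hp
  have hmeas1 : ∀ q : ℂ, AEStronglyMeasurable (fun t : ℝ => (q + (t:ℂ))⁻¹) σ := fun q =>
    ((measurable_const.add Complex.measurable_ofReal).inv).aestronglyMeasurable
  have hmeas2 : AEStronglyMeasurable (fun t : ℝ => -(((p + (t:ℂ))^2)⁻¹)) σ :=
    (((measurable_const.add Complex.measurable_ofReal).pow_const 2).inv.neg).aestronglyMeasurable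
  have hlow : ∀ᵐ (t : ℝ) ∂σ, ∀ q ∈ ball p (c/2), c/2 * (1+t) ≤ Complex.abs (q + (t:ℂ)) := by
    filter_upwards [ae_nonneg hsupp] with t ht q hq
    have h1 : Complex.abs (p + t) ≤ Complex.abs (q + t) + Complex.abs (p - q) := by
      have := Complex.abs.add_le (q + t) (p - q)
      calc Complex.abs (p + t) = Complex.abs ((q + t) + (p - q)) := by ring_nf
        _ ≤ _ := this
    have h2 : Complex.abs (p - q) < c/2 := by
      rw [mem_ball, Complex.dist_eq] at hq
      rw [← Complex.abs.map_neg, neg_sub]; exact hq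
    have h3 := hcle t ht
    nlinarith
  have hbound : ∀ᵐ (t : ℝ) ∂σ, ∀ q ∈ ball p (c/2),
      ‖-(((q + (t:ℂ))^2)⁻¹)‖ ≤ (c/2)⁻¹^2 * (1+t)⁻¹ := by
    filter_upwards [hlow, ae_nonneg hsupp] with t hlt ht q hq
    have h1 := hlt q hq
    have h3 : (0:ℝ) < 1 + t := by linarith
    rw [norm_neg, norm_inv, norm_pow, Complex.norm_eq_abs]
    have h4 : (c/2 * (1+t))^2 ≤ (Complex.abs (q + t))^2 := pow_le_pow_left₀ (by positivity) h1 2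
    calc ((Complex.abs (q + t))^2)⁻¹ ≤ ((c/2 * (1+t))^2)⁻¹ :=
          inv_anti₀ (by positivity) h4
      _ = (c/2)⁻¹^2 * ((1+t)^2)⁻¹ := by rw [mul_pow, mul_inv, inv_pow]
      _ ≤ (c/2)⁻¹^2 * (1+t)⁻¹ := by
          have h6 : ((1+t)^2)⁻¹ ≤ (1+t)⁻¹ := by
            apply inv_anti₀ h3
            nlinarith
          apply mul_le_mul_of_nonneg_left h6 (by positivity)
  have hbint : Integrable (fun t : ℝ => (c/2)⁻¹^2 * (1+t)⁻¹) σ := hσint.const_mul _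
  have hdiff : ∀ᵐ (t : ℝ) ∂σ, ∀ q ∈ ball p (c/2),
      HasDerivAt (fun q : ℂ => (q + (t:ℂ))⁻¹) (-(((q + (t:ℂ))^2)⁻¹)) q := by
    filter_upwards [hlow, ae_nonneg hsupp] with t hlt ht q hq
    have h1 := hlt q hq
    have h3 : (0:ℝ) < 1 + t := by linarith
    have hne : q + (t:ℂ) ≠ 0 := by
      intro h
      rw [h] at h1
      simp only [map_zero] at h1
      nlinarith
    have := ((hasDerivAt_id q).add_const (t:ℂ)).inv hne
    simp only [neg_div, one_div] at this
    exact this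
  have key := hasDerivAt_integral_of_dominated_loc_of_deriv_le
    (F := fun (q : ℂ) (t : ℝ) => (q + (t:ℂ))⁻¹)
    (F' := fun (q : ℂ) (t : ℝ) => -(((q + (t:ℂ))^2)⁻¹))
    (x₀ := p) (bound := fun t : ℝ => (c/2)⁻¹^2 * (1+t)⁻¹)
    (ball_mem_nhds p (half_pos hc)) (Eventually.of_forall (fun q => hmeas1 q))
    (integrable_inv hsupp hσint hp) hmeas2 hbound hbint hdiff
  exact key


lemma q_re_im (p₀ s φ : ℝ) :
    ((p₀:ℂ) + s * Complex.exp (φ * I)).re = p₀ + s * Real.cos φ ∧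
    ((p₀:ℂ) + s * Complex.exp (φ * I)).im = s * Real.sin φ := by
  constructor <;>
  simp [Complex.add_re, Complex.add_im, Complex.mul_re, Complex.mul_im,
    Complex.exp_ofReal_mul_I_re, Complex.exp_ofReal_mul_I_im]

lemma sector_abs_lower {p₀ s φ t α : ℝ} (hp₀ : 0 < p₀) (hs : 0 ≤ s) (ht : 0 ≤ t)
    (hφ : |φ| ≤ α) (hα : α < Real.pi) :
    Real.sqrt ((1 + Real.cos α)/2) * (p₀ + t + s) ≤
      Complex.abs ((p₀:ℂ) + s * Complex.exp (φ * I) + t) := by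
  have hα0 : 0 ≤ α := le_trans (abs_nonneg φ) hφ
  have hcos : Real.cos α ≤ Real.cos φ := by
    rw [← Real.cos_abs φ]
    exact Real.cos_le_cos_of_nonneg_of_le_pi (abs_nonneg φ) hα.le hφ
  have hcosα : -1 < Real.cos α := by
    have := Real.cos_lt_cos_of_nonneg_of_le_pi hα0 le_rfl hα
    rwa [Real.cos_pi] at this
  have hcos1 : Real.cos φ ≤ 1 := Real.cos_le_one φ
  have hm0 : (0:ℝ) ≤ (1 + Real.cos α)/2 := by linarith
  have hns : Complex.normSq ((p₀:ℂ) + s * Complex.exp (φ * I) + t)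
      = (p₀ + t + s*Real.cos φ)^2 + (s*Real.sin φ)^2 := by
    rw [Complex.normSq_apply]
    obtain ⟨h1, h2⟩ := q_re_im p₀ s φ
    have h3 : ((p₀:ℂ) + s * Complex.exp (φ * I) + t).re = p₀ + s * Real.cos φ + t := by
      rw [Complex.add_re, h1]; simp
    have h4 : ((p₀:ℂ) + s * Complex.exp (φ * I) + t).im = s * Real.sin φ := by
      rw [Complex.add_im, h2]; simp
    rw [h3, h4]; ring
  have hsincos : Real.sin φ^2 + Real.cos φ^2 = 1 := Real.sin_sq_add_cos_sq φ
  have key : ((1 + Real.cos α)/2) * (p₀ + t + s)^2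
      ≤ Complex.normSq ((p₀:ℂ) + s * Complex.exp (φ * I) + t) := by
    rw [hns]
    have hss : (s*Real.sin φ)^2 + (s*Real.cos φ)^2 = s^2 := by
      rw [mul_pow, mul_pow, ← mul_add, hsincos, mul_one]
    nlinarith [hss, mul_nonneg (mul_nonneg (by linarith : (0:ℝ) ≤ p₀ + t) hs)
      (sub_nonneg.2 hcos), mul_nonneg (sub_nonneg.2 (Real.cos_le_one α)) (sq_nonneg (p₀ + t - s))]
  calc Real.sqrt ((1 + Real.cos α)/2) * (p₀ + t + s)
      = Real.sqrt (((1 + Real.cos α)/2) * (p₀ + t + s)^2) := by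
        rw [Real.sqrt_mul hm0, Real.sqrt_sq (by linarith)]
    _ ≤ Real.sqrt (Complex.normSq ((p₀:ℂ) + s * Complex.exp (φ * I) + t)) :=
        Real.sqrt_le_sqrt key
    _ = Complex.abs ((p₀:ℂ) + s * Complex.exp (φ * I) + t) := (Complex.abs_apply _).symm


lemma re_lower {p₀ s φ t α : ℝ} (hp₀ : 0 < p₀) (hs : 0 < s) (ht : 0 ≤ t) (hφ : |φ| ≤ α)
    (hα : α < Real.pi)
    (hq0 : 0 < Complex.abs ((p₀:ℂ) + s * Complex.exp (φ * I))) :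
    Real.cos (α/2) * (Complex.abs ((p₀:ℂ) + s * Complex.exp (φ * I)) *
      (Complex.abs ((p₀:ℂ) + s * Complex.exp (φ * I)) + t)⁻¹) ≤
    ((Complex.exp (((φ/2 : ℝ) : ℂ) * I))⁻¹ * ((((p₀:ℂ) + s * Complex.exp (φ * I))) *
      ((((p₀:ℂ) + s * Complex.exp (φ * I))) + t)⁻¹)).re := by
  have hα0 : 0 ≤ α := le_trans (abs_nonneg φ) hφ
  set q : ℂ := (p₀:ℂ) + s * Complex.exp (φ * I) with hqdef
  set w : ℂ := Complex.exp (((φ/2 : ℝ) : ℂ) * I) with hwdef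
  set r : ℝ := Complex.abs q with hrdef
  set N : ℝ := Complex.normSq (q + t) with hNdef
  have hw0 : w ≠ 0 := Complex.exp_ne_zero _
  have habsw : Complex.abs w = 1 := Complex.abs_exp_ofReal_mul_I _
  have hw2 : w^2 = Complex.exp ((φ:ℂ) * I) := by
    rw [sq, ← Complex.exp_add]
    congr 1
    push_cast
    ring
  have hwinv : w⁻¹ = Complex.exp (((-(φ/2) : ℝ) : ℂ) * I) := by
    rw [← Complex.exp_neg]
    congr 1
    push_cast
    ring
  have hwre : w.re = Real.cos (φ/2) := Complex.exp_ofReal_mul_I_re _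
  have hwinvre : (w⁻¹).re = Real.cos (φ/2) := by
    rw [hwinv, Complex.exp_ofReal_mul_I_re, Real.cos_neg]
  have hcosα : -1 < Real.cos α := by
    have := Real.cos_lt_cos_of_nonneg_of_le_pi hα0 le_rfl hα
    rwa [Real.cos_pi] at this
  have hm0 : 0 < Real.sqrt ((1 + Real.cos α)/2) := Real.sqrt_pos.2 (by linarith)
  have habsqt : Real.sqrt ((1 + Real.cos α)/2) * (p₀ + t + s) ≤ Complex.abs (q + t) := by
    rw [hqdef]
    have : ((φ:ℝ):ℂ) * I = (φ:ℂ) * I := by norm_cast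
    exact sector_abs_lower hp₀ hs.le ht hφ hα
  have hqt_ne : q + (t:ℂ) ≠ 0 := by
    intro h
    rw [h, map_zero] at habsqt
    nlinarith
  have hN0 : 0 < N := Complex.normSq_pos.2 hqt_ne
  have hr0 : 0 < r := hq0
  have hrt0 : 0 < r + t := by linarith
  have hcoshalf : 0 < Real.cos (α/2) := Real.cos_pos_of_mem_Ioo
    ⟨by linarith [Real.pi_pos], by linarith⟩
  have hcosφhalf : Real.cos (α/2) ≤ Real.cos (φ/2) := by
    have h1 : Real.cos (φ/2) = Real.cos (|φ|/2) := by
      rcases abs_cases φ with ⟨h, _⟩ | ⟨h, _⟩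
      · rw [h]
      · rw [h]; rw [show -φ/2 = -(φ/2) by ring, Real.cos_neg]
    rw [h1]
    exact Real.cos_le_cos_of_nonneg_of_le_pi (by positivity) (by linarith) (by linarith)
  -- key algebraic identity for the real part
  have hwinvq : w⁻¹ * q = ↑p₀ * w⁻¹ + ↑s * w := by
    have hww : w⁻¹ * w^2 = w := by rw [sq, ← mul_assoc, inv_mul_cancel₀ hw0, one_mul]
    calc w⁻¹ * q = ↑p₀ * w⁻¹ + ↑s * (w⁻¹ * w^2) := by
          rw [hqdef, hw2.symm]; ring
      _ = ↑p₀ * w⁻¹ + ↑s * w := by rw [hww]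
  have hA : w⁻¹ * (q * ((q + (t:ℂ)))⁻¹)
      = (↑(Complex.normSq q) * w⁻¹ + ↑t * (↑p₀ * w⁻¹ + ↑s * w)) * ((N⁻¹:ℝ):ℂ) := by
    rw [show (q + (t:ℂ))⁻¹ = (starRingEnd ℂ) (q + ↑t) * (((Complex.normSq (q + ↑t))⁻¹ : ℝ):ℂ)
      from Complex.inv_def _]
    have hconj : (starRingEnd ℂ) (q + ↑t) = (starRingEnd ℂ) q + ↑t := by
      rw [map_add, Complex.conj_ofReal]
    have hqc : q * (starRingEnd ℂ) q = ↑(Complex.normSq q) := Complex.mul_conj q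
    calc w⁻¹ * (q * ((starRingEnd ℂ) (q + ↑t) * (((Complex.normSq (q + ↑t))⁻¹ : ℝ):ℂ)))
        = (w⁻¹ * (q * (starRingEnd ℂ) q) + ↑t * (w⁻¹ * q)) * ((N⁻¹:ℝ):ℂ) := by
          rw [hconj]; rw [← hNdef]; ring
      _ = (↑(Complex.normSq q) * w⁻¹ + ↑t * (↑p₀ * w⁻¹ + ↑s * w)) * ((N⁻¹:ℝ):ℂ) := by
          rw [hqc, hwinvq]; ring
  have hre : (w⁻¹ * (q * ((q + (t:ℂ)))⁻¹)).re
      = Real.cos (φ/2) * ((Complex.normSq q + t * (p₀ + s)) * N⁻¹) := by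
    rw [hA]
    rw [Complex.mul_re, Complex.ofReal_re, Complex.ofReal_im]
    simp only [Complex.add_re, Complex.mul_re, Complex.mul_im, Complex.ofReal_re,
      Complex.ofReal_im, Complex.add_im, hwinvre, hwre]
    ring
  rw [hre]
  -- now real estimates
  have hnq : Complex.normSq q = r^2 := by rw [hrdef, ← Complex.sq_abs]
  have hrps : r ≤ p₀ + s := by
    calc r ≤ Complex.abs ((p₀:ℂ)) + Complex.abs ((s:ℂ) * w^2) := by
          rw [hrdef, hqdef, hw2.symm]; exact Complex.abs.add_le _ _
      _ = p₀ + s := by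
          rw [Complex.abs_ofReal, map_mul, Complex.abs_ofReal, map_pow, habsw]
          rw [abs_of_pos hp₀, abs_of_pos hs]
          ring
  have hNle : N ≤ (r + t)^2 := by
    have h1 : Complex.abs (q + ↑t) ≤ r + t := by
      calc Complex.abs (q + ↑t) ≤ Complex.abs q + Complex.abs ((t:ℂ)) := Complex.abs.add_le _ _
        _ = r + t := by rw [← hrdef, Complex.abs_ofReal, _root_.abs_of_nonneg ht]
    have h2 : N = Complex.abs (q+↑t)^2 := by rw [hNdef, ← Complex.sq_abs]
    rw [h2]
    exact pow_le_pow_left₀ (AbsoluteValue.nonneg _ _) h1 2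
  have hNinv : ((r+t)^2)⁻¹ ≤ N⁻¹ := inv_anti₀ hN0 hNle
  have step1 : Real.cos (α/2) * ((r^2 + t * r) * ((r+t)^2)⁻¹)
      ≤ Real.cos (φ/2) * ((Complex.normSq q + t * (p₀ + s)) * N⁻¹) := by
    rw [hnq]
    have h1 : (r^2 + t*r) * ((r+t)^2)⁻¹ ≤ (r^2 + t*(p₀+s)) * N⁻¹ := by
      have h2 : (r^2 + t*r) * ((r+t)^2)⁻¹ ≤ (r^2 + t*r) * N⁻¹ :=
        mul_le_mul_of_nonneg_left hNinv (by positivity)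
      have h3 : (r^2 + t*r) * N⁻¹ ≤ (r^2 + t*(p₀+s)) * N⁻¹ := by
        apply mul_le_mul_of_nonneg_right _ (by positivity)
        nlinarith
      linarith
    calc Real.cos (α/2) * ((r^2 + t * r) * ((r+t)^2)⁻¹)
        ≤ Real.cos (α/2) * ((r^2 + t*(p₀+s)) * N⁻¹) :=
          mul_le_mul_of_nonneg_left h1 hcoshalf.le
      _ ≤ Real.cos (φ/2) * ((r^2 + t*(p₀+s)) * N⁻¹) := by
          apply mul_le_mul_of_nonneg_right hcosφhalf (by positivity)
  have heq : (r^2 + t * r) * ((r+t)^2)⁻¹ = r * (r+t)⁻¹ := by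
    field_simp
  rw [← heq]
  exact step1

end Stmt11

set_option maxHeartbeats 2000000 in
/-- The Laplace transform ũ_λ(p) = 𝒦(p)/(Φ(p)−λ) of the solution of the growth
equation is holomorphic on the shifted sector p₀ + Σ_{ρ+π/2}, and
(p−p₀)·𝒦(p)/(Φ(p)−λ) is bounded there. -/
theorem stmt_11 (σ : Measure ℝ) (hsupp : σ (Iio 0) = 0)
    (hσint : Integrable (fun t : ℝ => (1 + t)⁻¹) σ) (hσne : σ ≠ 0)
    (𝒦 : ℂ → ℂ) (h𝒦 : ∀ p : ℂ, p ∉ ((↑) '' Iic (0:ℝ) : Set ℂ) →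
      𝒦 p = ∫ t : ℝ, (p + (t : ℂ))⁻¹ ∂σ)
    (Φ : ℂ → ℂ) (hΦ : ∀ p : ℂ, Φ p = p * 𝒦 p)
    (Φℝ : ℝ → ℝ) (hΦℝ : ∀ x : ℝ, 0 < x → Φ (x : ℂ) = (Φℝ x : ℂ))
    (hinf : Tendsto Φℝ atTop atTop)
    (h0 : Tendsto Φℝ (nhdsWithin 0 (Ioi 0)) (nhds 0))
    (lam : ℝ) (hlam : 0 < lam) (p₀ : ℝ) (hp₀ : 0 < p₀) (hΦp₀ : Φℝ p₀ = lam)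
    (ρ : ℝ) (hρ : 0 < ρ) (hρ' : ρ < Real.pi / 2) :
    DifferentiableOn ℂ (fun p => 𝒦 p / (Φ p - lam))
      {p : ℂ | p ≠ p₀ ∧ |(p - p₀).arg| < ρ + Real.pi / 2} ∧
    ∃ C : ℝ, ∀ p ∈ {p : ℂ | p ≠ p₀ ∧ |(p - p₀).arg| < ρ + Real.pi / 2},
      ‖(p - p₀) * 𝒦 p / (Φ p - lam)‖ ≤ C := by
  have hπ := Real.pi_pos
  set α := ρ + Real.pi/2 with hαdef
  have hα0 : 0 < α := by positivity
  have hαπ : α < Real.pi := by rw [hαdef]; linarith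
  have hcoshalf : 0 < Real.cos (α/2) := Real.cos_pos_of_mem_Ioo ⟨by linarith, by linarith⟩
  have hcosα : -1 < Real.cos α := by
    have := Real.cos_lt_cos_of_nonneg_of_le_pi hα0.le le_rfl hαπ
    rwa [Real.cos_pi] at this
  set m := Real.sqrt ((1 + Real.cos α)/2) with hmdef
  have hm : 0 < m := Real.sqrt_pos.2 (by linarith)
  have hae := Stmt11.ae_nonneg hsupp
  have hK : ∀ p : ℂ, (p.im ≠ 0 ∨ 0 < p.re) → 𝒦 p = ∫ t : ℝ, (p + (t:ℂ))⁻¹ ∂σ :=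
    fun p hp => h𝒦 p ((Stmt11.mem_cut_iff p).2 hp)
  have hΩ : IsOpen {p : ℂ | p.im ≠ 0 ∨ 0 < p.re} := by
    rw [Set.setOf_or]
    exact (isOpen_ne.preimage Complex.continuous_im).union
      (isOpen_lt continuous_const Complex.continuous_re)
  have hKd : ∀ p : ℂ, (p.im ≠ 0 ∨ 0 < p.re) → DifferentiableAt ℂ 𝒦 p := by
    intro p hp
    have hev : 𝒦 =ᶠ[nhds p] (fun q : ℂ => ∫ t : ℝ, (q + (t:ℂ))⁻¹ ∂σ) := by
      filter_upwards [hΩ.mem_nhds hp] with q hq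
      exact hK q hq
    exact ((Stmt11.hasDerivAt_K hsupp hσint hp).2.congr_of_eventuallyEq hev).differentiableAt
  have hΦd : ∀ p : ℂ, (p.im ≠ 0 ∨ 0 < p.re) → DifferentiableAt ℂ Φ p := by
    intro p hp
    have : DifferentiableAt ℂ (fun q : ℂ => q * 𝒦 q) p := differentiableAt_fun_id.mul (hKd p hp)
    exact this.congr_of_eventuallyEq (Eventually.of_forall hΦ)
  -- real formula
  have hIntR : ∀ x : ℝ, 0 < x → Integrable (fun t : ℝ => (x + t)⁻¹) σ := by
    intro x hx
    have h1 := (Stmt11.integrable_inv hsupp hσint (p := (x:ℂ)) (Or.inr (by simpa using hx))).re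
    have h2 : (fun t : ℝ => RCLike.re (((x:ℂ) + (t:ℂ))⁻¹)) = fun t : ℝ => (x + t)⁻¹ := by
      funext t
      rw [RCLike.re_to_complex, ← Complex.ofReal_add, ← Complex.ofReal_inv, Complex.ofReal_re]
    rwa [h2] at h1
  have hΦℝeq : ∀ x : ℝ, 0 < x → Φℝ x = ∫ t, x * (x + t)⁻¹ ∂σ := by
    intro x hx
    have hxΩ : ((x:ℂ)).im ≠ 0 ∨ 0 < ((x:ℂ)).re := Or.inr (by simpa using hx)
    have h1 : ((Φℝ x : ℝ):ℂ) = (x:ℂ) * ∫ t : ℝ, ((x:ℂ) + t)⁻¹ ∂σ := by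
      rw [← hΦℝ x hx, hΦ, hK _ hxΩ]
    have h2 : (∫ t : ℝ, ((x:ℂ) + (t:ℂ))⁻¹ ∂σ) = ((∫ t, (x + t)⁻¹ ∂σ : ℝ) : ℂ) := by
      rw [show (fun t : ℝ => ((x:ℂ) + (t:ℂ))⁻¹) = fun t : ℝ => (((x + t)⁻¹ : ℝ) : ℂ) by
        funext t; push_cast; rfl]
      exact integral_ofReal
    rw [h2] at h1
    have h3 : ((Φℝ x : ℝ):ℂ) = ((x * ∫ t, (x + t)⁻¹ ∂σ : ℝ) : ℂ) := by
      rw [h1]; push_cast; ring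
    have h4 := Complex.ofReal_inj.1 h3
    rw [h4]
    exact (MeasureTheory.integral_const_mul x _).symm
  have hσIoi : σ (Ioi (0:ℝ)) ≠ 0 := by
    intro hzero
    have hae0 : ∀ᵐ t ∂σ, t = 0 := by
      rw [ae_iff]
      have hsub : {t : ℝ | ¬ t = 0} ⊆ Iio 0 ∪ Ioi 0 := by
        intro t ht
        rcases lt_trichotomy t 0 with h | h | h
        · exact Or.inl h
        · exact absurd h ht
        · exact Or.inr h
      refine measure_mono_null hsub ?_
      refine le_antisymm ?_ zero_le
      calc σ (Iio 0 ∪ Ioi 0) ≤ σ (Iio 0) + σ (Ioi 0) := measure_union_le _ _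
        _ = 0 := by rw [hsupp, hzero, add_zero]
    have hconst : ∀ x : ℝ, 0 < x → Φℝ x = (σ Set.univ).toReal := by
      intro x hx
      rw [hΦℝeq x hx]
      have hcongr : ∫ t, x * (x + t)⁻¹ ∂σ = ∫ _t, (1:ℝ) ∂σ := by
        refine integral_congr_ae ?_
        filter_upwards [hae0] with t ht
        rw [ht, add_zero, mul_inv_cancel₀ (ne_of_gt hx)]
      rw [hcongr]
      simp; rfl
    obtain ⟨x, hx1, hx2⟩ := ((hinf.eventually_gt_atTop ((σ Set.univ).toReal)).and
      (eventually_gt_atTop 0)).exists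
    rw [hconst x hx2] at hx1
    exact lt_irrefl _ hx1
  -- the sector avoids the cut and Φ ≠ lam there
  have hsector : ∀ s φ : ℝ, 0 < s → |φ| ≤ α →
      ((((p₀:ℂ) + s * Complex.exp ((φ:ℂ) * I)).im ≠ 0 ∨
        0 < ((p₀:ℂ) + s * Complex.exp ((φ:ℂ) * I)).re))
      ∧ Φ ((p₀:ℂ) + s * Complex.exp ((φ:ℂ) * I)) ≠ (lam:ℂ) := by
    intro s φ hs hφ
    rcases eq_or_ne φ 0 with rfl | hφ0
    · have hq : (p₀:ℂ) + s * Complex.exp (((0:ℝ):ℂ) * I) = (((p₀ + s : ℝ)):ℂ) := by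
        norm_num [Complex.exp_zero]
      rw [hq]
      have hx0 : 0 < p₀ + s := by linarith
      constructor
      · exact Or.inr (by simpa using hx0)
      · set x : ℝ := p₀ + s with hxdef
        have hmono : ∫ t, p₀ * (p₀ + t)⁻¹ ∂σ < ∫ t, x * (x + t)⁻¹ ∂σ := by
          have hdiff : 0 < ∫ t, (x * (x + t)⁻¹ - p₀ * (p₀ + t)⁻¹) ∂σ := by
            refine Stmt11.integral_pos hsupp hσIoi
              (((hIntR x hx0).const_mul x).sub ((hIntR p₀ hp₀).const_mul p₀)) ?_ ?_
            · filter_upwards [hae] with t ht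
              have h1 : (0:ℝ) < p₀ + t := by linarith
              have h2 : (0:ℝ) < x + t := by linarith
              rw [sub_nonneg, show p₀ * (p₀ + t)⁻¹ = p₀ / (p₀ + t) from (div_eq_mul_inv _ _).symm,
                show x * (x + t)⁻¹ = x / (x + t) from (div_eq_mul_inv _ _).symm,
                div_le_div_iff₀ h1 h2]
              nlinarith
            · intro t ht
              have h1 : (0:ℝ) < p₀ + t := by linarith
              have h2 : (0:ℝ) < x + t := by linarith
              rw [sub_pos, show p₀ * (p₀ + t)⁻¹ = p₀ / (p₀ + t) from (div_eq_mul_inv _ _).symm,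
                show x * (x + t)⁻¹ = x / (x + t) from (div_eq_mul_inv _ _).symm,
                div_lt_div_iff₀ h1 h2]
              nlinarith
          rw [MeasureTheory.integral_sub ((hIntR x hx0).const_mul x)
            ((hIntR p₀ hp₀).const_mul p₀)] at hdiff
          linarith
        intro hcon
        rw [hΦℝ x hx0] at hcon
        have h5 : Φℝ x = lam := by exact_mod_cast hcon
        rw [hΦℝeq x hx0] at h5
        have h6 : Φℝ p₀ = ∫ t, p₀ * (p₀ + t)⁻¹ ∂σ := hΦℝeq p₀ hp₀
        rw [hΦp₀] at h6
        rw [h5] at hmono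
        rw [← h6] at hmono
        exact lt_irrefl _ hmono
    · set q : ℂ := (p₀:ℂ) + s * Complex.exp ((φ:ℂ) * I) with hq
      have him : q.im = s * Real.sin φ := (Stmt11.q_re_im p₀ s φ).2
      have hsin : Real.sin φ ≠ 0 := by
        have habs : |φ| < Real.pi := lt_of_le_of_lt hφ hαπ
        rcases lt_or_gt_of_ne hφ0 with h | h
        · have h1 : 0 < Real.sin (-φ) := Real.sin_pos_of_pos_of_lt_pi (by linarith)
            (by rw [abs_of_neg h] at habs; linarith)
          rw [Real.sin_neg] at h1
          linarith
        · exact (Real.sin_pos_of_pos_of_lt_pi h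
            (by rw [_root_.abs_of_pos h] at habs; exact habs)).ne'
      have himne : q.im ≠ 0 := by rw [him]; exact mul_ne_zero (ne_of_gt hs) hsin
      refine ⟨Or.inl himne, ?_⟩
      have hqt : ∀ t : ℝ, q + (t:ℂ) ≠ 0 := by
        intro t h
        have h2 := congrArg Complex.im h
        simp only [Complex.add_im, Complex.ofReal_im, add_zero, Complex.zero_im] at h2
        exact himne h2
      have hint2 := Stmt11.integrable_inv hsupp hσint (Or.inl himne)
      have hΦeq : Φ q = ∫ t : ℝ, q * (q + (t:ℂ))⁻¹ ∂σ := by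
        rw [hΦ q, hK q (Or.inl himne), MeasureTheory.integral_const_mul]
      have hΦim : (Φ q).im = ∫ t : ℝ, (q * (q + (t:ℂ))⁻¹).im ∂σ := by
        rw [hΦeq]
        exact (integral_im (hint2.const_mul q)).symm
      have hterm : ∀ t : ℝ, (q * (q + (t:ℂ))⁻¹).im = t * q.im / Complex.normSq (q + t) := by
        intro t
        rw [show q * (q + (t:ℂ))⁻¹ = q / (q + t) from (div_eq_mul_inv _ _).symm]
        rw [Complex.div_im]
        have h1 : (q + (t:ℂ)).re = q.re + t := by simp
        have h2 : (q + (t:ℂ)).im = q.im := by simp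
        rw [h1, h2]
        ring
      have hint3 : Integrable (fun t : ℝ => (q * (q + (t:ℂ))⁻¹).im) σ := (hint2.const_mul q).im
      intro hcon
      have him0 : (Φ q).im = 0 := by rw [hcon]; simp
      rcases lt_or_gt_of_ne himne with hneg | hpos
      · have hposint : 0 < ∫ t : ℝ, -((q * (q + (t:ℂ))⁻¹).im) ∂σ := by
          refine Stmt11.integral_pos hsupp hσIoi hint3.neg ?_ ?_
          · filter_upwards [hae] with t ht
            rw [hterm t, neg_nonneg]
            apply div_nonpos_of_nonpos_of_nonneg
            · exact mul_nonpos_of_nonneg_of_nonpos ht hneg.le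
            · exact Complex.normSq_nonneg _
          · intro t ht
            rw [hterm t, neg_pos]
            exact div_neg_of_neg_of_pos (mul_neg_of_pos_of_neg ht hneg)
              (Complex.normSq_pos.2 (hqt t))
        rw [MeasureTheory.integral_neg, ← hΦim, him0] at hposint
        simp at hposint
      · have hposint : 0 < ∫ t : ℝ, (q * (q + (t:ℂ))⁻¹).im ∂σ := by
          refine Stmt11.integral_pos hsupp hσIoi hint3 ?_ ?_
          · filter_upwards [hae] with t ht
            rw [hterm t]
            apply div_nonneg
            · exact mul_nonneg ht hpos.le
            · exact Complex.normSq_nonneg _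
          · intro t ht
            rw [hterm t]
            exact div_pos (mul_pos ht hpos) (Complex.normSq_pos.2 (hqt t))
        rw [← hΦim, him0] at hposint
        simp at hposint
  have hrep : ∀ p : ℂ, p ≠ (p₀:ℂ) →
      p = (p₀:ℂ) + (Complex.abs (p - p₀) : ℝ) * Complex.exp ((((p - p₀).arg : ℝ):ℂ) * I) := by
    intro p hp
    have := Complex.abs_mul_exp_arg_mul_I (p - p₀)
    rw [this]
    ring
  constructor
  · intro p hp
    obtain ⟨hp1, hp2⟩ := hp
    have hs : 0 < Complex.abs (p - p₀) := AbsoluteValue.pos _ (sub_ne_zero.2 hp1)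
    have hsec := hsector (Complex.abs (p-p₀)) (p-p₀).arg hs (le_of_lt hp2)
    rw [← hrep p hp1] at hsec
    exact ((hKd p hsec.1).div ((hΦd p hsec.1).sub_const _)
      (sub_ne_zero.2 hsec.2)).differentiableWithinAt
  -- Part 2 : the bound
  -- (i) near p₀
  have hp₀Ω : ((p₀:ℂ)).im ≠ 0 ∨ 0 < ((p₀:ℂ)).re := Or.inr (by simpa using hp₀)
  obtain ⟨hI'int, hKderiv⟩ := Stmt11.hasDerivAt_K hsupp hσint hp₀Ω
  have hint1 := Stmt11.integrable_inv hsupp hσint hp₀Ω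
  have hKcont : ContinuousAt 𝒦 (p₀:ℂ) := (hKd _ hp₀Ω).continuousAt
  set D : ℂ := (∫ t : ℝ, ((p₀:ℂ) + t)⁻¹ ∂σ) + p₀ * ∫ t : ℝ, -((((p₀:ℂ) + t)^2)⁻¹) ∂σ with hDdef
  have hΦderiv : HasDerivAt Φ D (p₀:ℂ) := by
    have h1 : HasDerivAt (fun q : ℂ => q * ∫ t : ℝ, (q + (t:ℂ))⁻¹ ∂σ) D (p₀:ℂ) := by
      have h2 := (hasDerivAt_id ((p₀:ℂ))).mul hKderiv
      rw [hDdef]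
      simp at h2; exact h2
    refine h1.congr_of_eventuallyEq ?_
    filter_upwards [hΩ.mem_nhds hp₀Ω] with q hq
    rw [hΦ q, hK q hq]
  have hD0 : D ≠ 0 := by
    have hcomb : Integrable (fun t : ℝ => ((p₀:ℂ) + t)⁻¹ + (p₀:ℂ) * -((((p₀:ℂ) + t)^2)⁻¹)) σ :=
      hint1.add (hI'int.const_mul _)
    have h2 : D = ∫ t : ℝ, (((p₀:ℂ) + t)⁻¹ + (p₀:ℂ) * -((((p₀:ℂ) + t)^2)⁻¹)) ∂σ := by
      rw [hDdef, MeasureTheory.integral_add hint1 (hI'int.const_mul _),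
        MeasureTheory.integral_const_mul]
    have h3 : 0 < ∫ t : ℝ, (((p₀:ℂ) + t)⁻¹ + (p₀:ℂ) * -((((p₀:ℂ) + t)^2)⁻¹)).re ∂σ := by
      refine Stmt11.integral_pos hsupp hσIoi hcomb.re ?_ ?_
      · filter_upwards [hae] with t ht
        have hpt : (0:ℝ) < p₀ + t := by linarith
        have hne : ((p₀:ℂ) + (t:ℂ)) ≠ 0 := by
          exact_mod_cast ne_of_gt hpt
        have he : ((p₀:ℂ) + ↑t)⁻¹ + (p₀:ℂ) * -((((p₀:ℂ) + ↑t)^2)⁻¹)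
            = (((t * ((p₀ + t)^2)⁻¹ : ℝ)) : ℂ) := by
          push_cast
          field_simp
          ring
        rw [he, Complex.ofReal_re]
        positivity
      · intro t ht
        have hpt : (0:ℝ) < p₀ + t := by linarith
        have hne : ((p₀:ℂ) + (t:ℂ)) ≠ 0 := by
          exact_mod_cast ne_of_gt hpt
        have he : ((p₀:ℂ) + ↑t)⁻¹ + (p₀:ℂ) * -((((p₀:ℂ) + ↑t)^2)⁻¹)
            = (((t * ((p₀ + t)^2)⁻¹ : ℝ)) : ℂ) := by
          push_cast
          field_simp
          ring
        rw [he, Complex.ofReal_re]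
        positivity
    have h4 : (∫ t : ℝ, (((p₀:ℂ) + t)⁻¹ + (p₀:ℂ) * -((((p₀:ℂ) + t)^2)⁻¹)).re ∂σ) = D.re := by
      rw [h2]
      exact integral_re hcomb
    intro h
    rw [h4, h] at h3
    simp at h3
  have hΦp₀lam : Φ ((p₀:ℂ)) = (lam:ℂ) := by rw [hΦℝ p₀ hp₀, hΦp₀]
  obtain ⟨δ, hδ0, hδ⟩ : ∃ δ > 0, ∀ p : ℂ, dist p (p₀:ℂ) < δ → p ≠ (p₀:ℂ) →
      Complex.abs ((p - p₀) * 𝒦 p / (Φ p - lam)) ≤ ‖D⁻¹ * 𝒦 (p₀:ℂ)‖ + 1 := by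
    have h1 := hasDerivAt_iff_tendsto_slope.1 hΦderiv
    have h2 : Tendsto (fun p : ℂ => (slope Φ (p₀:ℂ) p)⁻¹ * 𝒦 p)
        (nhdsWithin (p₀:ℂ) {(p₀:ℂ)}ᶜ) (nhds (D⁻¹ * 𝒦 (p₀:ℂ))) :=
      (h1.inv₀ hD0).mul ((hKcont.tendsto).mono_left nhdsWithin_le_nhds)
    have h3 : Tendsto (fun p : ℂ => (p - p₀) * 𝒦 p / (Φ p - lam))
        (nhdsWithin (p₀:ℂ) {(p₀:ℂ)}ᶜ) (nhds (D⁻¹ * 𝒦 (p₀:ℂ))) := by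
      refine Tendsto.congr (fun p => ?_) h2
      rw [slope_def_field, hΦp₀lam, inv_div, div_mul_eq_mul_div]
    have h4 := h3.norm.eventually_lt_const (lt_add_one ‖D⁻¹ * 𝒦 (p₀:ℂ)‖)
    rw [eventually_nhdsWithin_iff, Metric.eventually_nhds_iff] at h4
    obtain ⟨ε, hε0, hε⟩ := h4
    refine ⟨ε, hε0, fun p hdist hne => ?_⟩
    have h5 := hε hdist (by simpa using hne)
    rw [Complex.norm_eq_abs] at h5
    exact le_of_lt h5
  -- (iii) far away
  obtain ⟨r₁, hr₁⟩ := eventually_atTop.1 (hinf.eventually_ge_atTop ((lam + 1)/Real.cos (α/2)))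
  set C₁ : ℝ := (m * min p₀ 1)⁻¹ * ∫ t, (1+t)⁻¹ ∂σ with hC₁def
  have hKbound : ∀ s φ : ℝ, 0 < s → |φ| ≤ α →
      Complex.abs (𝒦 ((p₀:ℂ) + s * Complex.exp ((φ:ℂ) * I))) ≤ C₁ := by
    intro s φ hs hφ
    have hmin : 0 < min p₀ 1 := lt_min hp₀ one_pos
    have hqΩ := (hsector s φ hs hφ).1
    rw [hK _ hqΩ, ← Complex.norm_eq_abs, hC₁def, ← MeasureTheory.integral_const_mul]
    refine norm_integral_le_of_norm_le (hσint.const_mul _) ?_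
    filter_upwards [hae] with t ht
    have h1 := Stmt11.sector_abs_lower (t := t) hp₀ hs.le ht hφ hαπ
    rw [← hmdef] at h1
    have h2 : min p₀ 1 * (1+t) ≤ p₀ + t + s := by
      rcases min_le_iff.1 (le_refl (min p₀ 1)) with _h | _h
      all_goals rcases le_total p₀ 1 with hc | hc
      · rw [min_eq_left hc]; nlinarith
      · rw [min_eq_right hc]; linarith
      · rw [min_eq_left hc]; nlinarith
      · rw [min_eq_right hc]; linarith
    have h3 : 0 < m * (min p₀ 1 * (1+t)) := by positivity
    have h4 : m * (min p₀ 1 * (1+t)) ≤ Complex.abs ((p₀:ℂ) + s * Complex.exp ((φ:ℂ) * I) + t) := by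
      refine le_trans ?_ h1
      have := mul_le_mul_of_nonneg_left h2 hm.le
      linarith
    rw [Complex.norm_eq_abs, map_inv₀]
    have h5 := inv_anti₀ h3 h4
    calc (Complex.abs ((p₀:ℂ) + s * Complex.exp ((φ:ℂ) * I) + (t:ℂ)))⁻¹
        ≤ (m * (min p₀ 1 * (1+t)))⁻¹ := h5
      _ = (m * min p₀ 1)⁻¹ * (1+t)⁻¹ := by
          rw [mul_inv, mul_inv, mul_inv]
          ring
  set R : ℝ := |r₁| + p₀ + 1 with hRdef
  have hfar : ∀ s φ : ℝ, R ≤ s → |φ| ≤ α →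
      1 ≤ Complex.abs (Φ ((p₀:ℂ) + s * Complex.exp ((φ:ℂ) * I)) - lam) := by
    intro s φ hRs hφ
    have habsr1 : (0:ℝ) ≤ |r₁| := abs_nonneg r₁
    have hs0 : 0 < s := by rw [hRdef] at hRs; linarith
    set q : ℂ := (p₀:ℂ) + s * Complex.exp ((φ:ℂ) * I) with hq
    set w : ℂ := Complex.exp (((φ/2 : ℝ):ℂ) * I) with hw
    have hqΩ := (hsector s φ hs0 hφ).1
    set r : ℝ := Complex.abs q with hr
    have hrge : s - p₀ ≤ r := by
      have h1 : Complex.abs ((s:ℂ) * Complex.exp ((φ:ℂ) * I)) = s := by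
        rw [map_mul, Complex.abs_ofReal, Complex.abs_exp_ofReal_mul_I, mul_one,
          _root_.abs_of_pos hs0]
      have h3 := Complex.abs.add_le q (-(p₀:ℂ))
      rw [Complex.abs.map_neg, Complex.abs_ofReal, _root_.abs_of_pos hp₀] at h3
      have h4 : q + (-(p₀:ℂ)) = (s:ℂ) * Complex.exp ((φ:ℂ) * I) := by rw [hq]; ring
      rw [h4, h1] at h3
      linarith
    have hrpos : 0 < r := by rw [hRdef] at hRs; linarith
    have hrr₁ : r₁ ≤ r := by
      rw [hRdef] at hRs
      have := le_abs_self r₁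
      linarith
    have hint2 : Integrable (fun t : ℝ => (q + (t:ℂ))⁻¹) σ :=
      Stmt11.integrable_inv hsupp hσint hqΩ
    have h2 : w⁻¹ * Φ q = ∫ t : ℝ, w⁻¹ * (q * (q + (t:ℂ))⁻¹) ∂σ := by
      rw [hΦ q, hK q hqΩ]
      calc w⁻¹ * (q * ∫ t : ℝ, (q + (t:ℂ))⁻¹ ∂σ)
          = (w⁻¹ * q) * ∫ t : ℝ, (q + (t:ℂ))⁻¹ ∂σ := by ring
        _ = ∫ t : ℝ, (w⁻¹ * q) * (q + (t:ℂ))⁻¹ ∂σ := (MeasureTheory.integral_const_mul _ _).symm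
        _ = ∫ t : ℝ, w⁻¹ * (q * (q + (t:ℂ))⁻¹) ∂σ := by
            congr 1
            funext t
            ring
    have hint3 : Integrable (fun t : ℝ => w⁻¹ * (q * (q + (t:ℂ))⁻¹)) σ := by
      have h5 := hint2.const_mul (w⁻¹ * q)
      simpa [mul_assoc] using h5
    have h3 : Real.cos (α/2) * Φℝ r ≤ (w⁻¹ * Φ q).re := by
      have h4 : (w⁻¹ * Φ q).re = ∫ t : ℝ, (w⁻¹ * (q * (q + (t:ℂ))⁻¹)).re ∂σ := by
        rw [h2]
        exact (integral_re hint3).symm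
      have h5 : ∫ t : ℝ, Real.cos (α/2) * (r * (r + t)⁻¹) ∂σ
          ≤ ∫ t : ℝ, (w⁻¹ * (q * (q + (t:ℂ))⁻¹)).re ∂σ := by
        refine integral_mono_ae (((hIntR r hrpos).const_mul r).const_mul _) hint3.re ?_
        filter_upwards [hae] with t ht
        exact Stmt11.re_lower hp₀ hs0 ht hφ hαπ hrpos
      have h6 : ∫ t : ℝ, Real.cos (α/2) * (r * (r + t)⁻¹) ∂σ = Real.cos (α/2) * Φℝ r := by
        rw [MeasureTheory.integral_const_mul, MeasureTheory.integral_const_mul, hΦℝeq r hrpos,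
          MeasureTheory.integral_const_mul]
      rw [h4, ← h6]
      exact h5
    have h7 : lam + 1 ≤ Real.cos (α/2) * Φℝ r := by
      have h8 := hr₁ r hrr₁
      rw [div_le_iff₀ hcoshalf] at h8
      rw [mul_comm]
      linarith
    have h8 : (w⁻¹ * Φ q).re ≤ Complex.abs (Φ q) := by
      have h9 := Complex.re_le_abs (w⁻¹ * Φ q)
      rwa [map_mul, map_inv₀, Complex.abs_exp_ofReal_mul_I, inv_one, one_mul] at h9
    have h10 : lam + 1 ≤ Complex.abs (Φ q) := by linarith
    have h11 := Complex.abs.add_le (Φ q - ↑lam) ((lam:ℂ))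
    rw [sub_add_cancel, Complex.abs_ofReal, _root_.abs_of_pos hlam] at h11
    linarith
  -- (ii) intermediate compact region
  set Kf : ℝ × ℝ → ℂ := fun rθ => (p₀:ℂ) + rθ.1 * Complex.exp ((rθ.2:ℂ) * I) with hKfdef
  set Kset : Set ℂ := Kf '' (Icc δ R ×ˢ Icc (-α) α) with hKsetdef
  have hKsetcomp : IsCompact Kset := by
    apply (isCompact_Icc.prod isCompact_Icc).image
    fun_prop
  have hcontOn : ContinuousOn (fun p : ℂ => Complex.abs ((p - p₀) * 𝒦 p / (Φ p - lam))) Kset := by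
    intro p hpK
    obtain ⟨⟨s, φ⟩, ⟨⟨hs1, _hs2⟩, ⟨hφ1, hφ2⟩⟩, rfl⟩ := hpK
    have hs0 : 0 < s := lt_of_lt_of_le hδ0 hs1
    have hsec := hsector s φ hs0 (abs_le.2 ⟨hφ1, hφ2⟩)
    have hc1 : ContinuousAt 𝒦 (Kf (s, φ)) := (hKd _ hsec.1).continuousAt
    have hc2 : ContinuousAt Φ (Kf (s, φ)) := (hΦd _ hsec.1).continuousAt
    refine ContinuousAt.continuousWithinAt ?_
    exact Complex.continuous_abs.continuousAt.comp
      (((continuousAt_id.sub continuousAt_const).mul hc1).div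
        (hc2.sub continuousAt_const) (sub_ne_zero.2 hsec.2))
  obtain ⟨M₂, hM₂⟩ := hKsetcomp.exists_bound_of_continuousOn hcontOn
  -- assembly
  refine ⟨max (‖D⁻¹ * 𝒦 (p₀:ℂ)‖ + 1) (max M₂ (1 + lam + p₀ * C₁)), fun p hp => ?_⟩
  obtain ⟨hp1, hp2⟩ := hp
  have hs : 0 < Complex.abs (p - p₀) := AbsoluteValue.pos _ (sub_ne_zero.2 hp1)
  rcases lt_or_ge (Complex.abs (p - p₀)) δ with hcase | hcase
  · refine le_trans (hδ p (by rwa [Complex.dist_eq]) hp1) (le_max_left _ _)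
  rcases le_total (Complex.abs (p - p₀)) R with hcase2 | hcase2
  · have hmem : p ∈ Kset := by
      refine ⟨(Complex.abs (p - p₀), (p - p₀).arg), ⟨⟨hcase, hcase2⟩, ?_⟩, (hrep p hp1).symm⟩
      exact ⟨(abs_le.1 hp2.le).1, (abs_le.1 hp2.le).2⟩
    have h1 := hM₂ p hmem
    rw [Real.norm_eq_abs, _root_.abs_of_nonneg (AbsoluteValue.nonneg _ _)] at h1
    exact le_trans h1 (le_trans (le_max_left _ _) (le_max_right _ _))
  · have h1 := hfar (Complex.abs (p - p₀)) (p - p₀).arg hcase2 hp2.le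
    have hKb := hKbound (Complex.abs (p - p₀)) (p - p₀).arg hs hp2.le
    rw [← hrep p hp1] at h1 hKb
    have habs1 : (1:ℝ) ≤ Complex.abs (Φ p - lam) := h1
    have hd0 : Φ p - (lam:ℂ) ≠ 0 := by
      intro h
      rw [h, map_zero] at habs1
      linarith
    have hrw : (p - ↑p₀) * 𝒦 p / (Φ p - ↑lam) = 1 + ((↑lam - ↑p₀ * 𝒦 p) / (Φ p - ↑lam)) := by
      field_simp
      rw [hΦ p]
      ring
    have hnum : Complex.abs ((lam:ℂ) - ↑p₀ * 𝒦 p) ≤ lam + p₀ * C₁ := by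
      calc Complex.abs ((lam:ℂ) - ↑p₀ * 𝒦 p)
          ≤ Complex.abs ((lam:ℂ)) + Complex.abs (↑p₀ * 𝒦 p) := by
            rw [sub_eq_add_neg]
            refine (Complex.abs.add_le _ _).trans ?_
            rw [Complex.abs.map_neg]
        _ ≤ lam + p₀ * C₁ := by
            rw [map_mul, Complex.abs_ofReal, Complex.abs_ofReal,
              _root_.abs_of_pos hlam, _root_.abs_of_pos hp₀]
            have := mul_le_mul_of_nonneg_left hKb hp₀.le
            linarith
    calc Complex.abs ((p - ↑p₀) * 𝒦 p / (Φ p - ↑lam))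
        ≤ 1 + Complex.abs ((lam:ℂ) - ↑p₀ * 𝒦 p) / Complex.abs (Φ p - ↑lam) := by
          rw [hrw]
          refine (Complex.abs.add_le _ _).trans ?_
          rw [map_one, map_div₀]
      _ ≤ 1 + (lam + p₀ * C₁) := by
          have h2 : Complex.abs ((lam:ℂ) - ↑p₀ * 𝒦 p) / Complex.abs (Φ p - ↑lam)
              ≤ Complex.abs ((lam:ℂ) - ↑p₀ * 𝒦 p) := by
            apply div_le_self (AbsoluteValue.nonneg _ _) habs1
          linarith
      _ ≤ max (‖D⁻¹ * 𝒦 (p₀:ℂ)‖ + 1) (max M₂ (1 + lam + p₀ * C₁)) := by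
          refine le_trans (by linarith) (le_trans (le_max_right M₂ _) (le_max_right _ _))
end

section
/- For 0 < α < 1 and λ > 0, the Mittag-Leffler function satisfies E_α(λ t^α) = (1/α) e^{λ^{1/α} t} + o(e^{λ^{1/α} t}) as t → ∞. -/
open Filter Asymptotics Real

/-- The Mittag-Leffler function E_α(z) = Σ_{n=0}^∞ z^n / Γ(αn+1). -/
noncomputable def mittagLeffler (α z : ℝ) : ℝ :=
  ∑' n : ℕ, z ^ n / Real.Gamma (α * n + 1)

namespace MLAux

open Set MeasureTheory Topology


noncomputable def hh (s x : ℝ) : ℝ := s ^ x / Real.Gamma (x + 1)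

noncomputable def Mb (s : ℝ) : ℝ :=
  2 * s + s * Real.exp (9 / 10 * s) + 2 * Real.exp s / Real.sqrt s

lemma Mb_nonneg {s : ℝ} (hs : 0 ≤ s) : 0 ≤ Mb s := by
  unfold Mb; positivity

/-- Slope bound: Γ(x+1) ≥ n! · n^(x-n) for x ∈ [n, n+1], n ≥ 1. -/
lemma gamma_lb_interval {n : ℕ} (hn : 1 ≤ n) {x : ℝ} (hx : (n : ℝ) ≤ x) (hx' : x ≤ n + 1) :
    (n.factorial : ℝ) * (n : ℝ) ^ (x - n) ≤ Real.Gamma (x + 1) := by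
  have hn0 : (0:ℝ) < n := by exact_mod_cast hn
  rcases eq_or_lt_of_le hx with h | h
  · rw [← h]
    simp only [sub_self, Real.rpow_zero, mul_one]
    rw [show ((n:ℝ) + 1) = ((n:ℕ):ℝ) + 1 by push_cast; ring, Real.Gamma_nat_eq_factorial]
  · have key := Real.convexOn_log_Gamma.slope_mono_adjacent
      (show (n:ℝ) ∈ Set.Ioi (0:ℝ) from hn0)
      (show (x + 1 : ℝ) ∈ Set.Ioi (0:ℝ) by simp; linarith)
      (show (n:ℝ) < (n:ℝ) + 1 by linarith)
      (show (n:ℝ) + 1 < x + 1 by linarith)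
    have hΓn : Real.Gamma ((n:ℝ)) > 0 := Real.Gamma_pos_of_pos hn0
    have hΓn1 : Real.Gamma ((n:ℝ) + 1) = n * Real.Gamma n :=
      Real.Gamma_add_one (ne_of_gt hn0)
    have hΓfac : Real.Gamma ((n:ℝ) + 1) = n.factorial := by
      rw [show ((n:ℝ) + 1) = ((n:ℕ):ℝ) + 1 by push_cast; ring, Real.Gamma_nat_eq_factorial]
    have hΓx : Real.Gamma (x + 1) > 0 := Real.Gamma_pos_of_pos (by linarith)
    simp only [Function.comp] at key
    have e1 : (Real.log (Real.Gamma ((n:ℝ)+1)) - Real.log (Real.Gamma n)) / ((n:ℝ) + 1 - n)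
        = Real.log n := by
      rw [hΓn1, Real.log_mul (ne_of_gt hn0) (ne_of_gt hΓn)]
      field_simp
      ring
    rw [e1] at key
    -- key : log n ≤ (log Γ(x+1) - log Γ(n+1)) / (x + 1 - (n+1))
    have hd : (0:ℝ) < x + 1 - ((n:ℝ) + 1) := by linarith
    rw [le_div_iff₀ hd] at key
    · have key2 : Real.log (n.factorial) + (x - n) * Real.log n ≤ Real.log (Real.Gamma (x+1)) := by
        rw [← hΓfac]
        nlinarith [key]
      have : Real.exp (Real.log (n.factorial) + (x - n) * Real.log n) ≤ Real.Gamma (x + 1) := by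
        calc Real.exp (Real.log (n.factorial) + (x - n) * Real.log n)
            ≤ Real.exp (Real.log (Real.Gamma (x+1))) := Real.exp_le_exp.2 key2
          _ = Real.Gamma (x + 1) := Real.exp_log hΓx
      rw [Real.exp_add, Real.exp_log (by positivity)] at this
      rwa [Real.rpow_def_of_pos hn0, mul_comm (Real.log n)]

/-- Γ(x+1) ≥ 1/2 for x ∈ [0,1]. -/
lemma gamma_lb_01 {x : ℝ} (hx : 0 ≤ x) (hx' : x ≤ 1) : (1:ℝ)/2 ≤ Real.Gamma (x + 1) := by
  have hΓ2 : Real.Gamma 2 = 1 := by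
    rw [show (2:ℝ) = 1 + 1 by norm_num, Real.Gamma_add_one one_ne_zero, Real.Gamma_one]; ring
  have hΓ3 : Real.Gamma 3 = 2 := by
    rw [show (3:ℝ) = 2 + 1 by norm_num, Real.Gamma_add_one two_ne_zero, hΓ2]; ring
  rcases eq_or_lt_of_le hx' with h | h
  · rw [h, show (1:ℝ)+1 = 2 by norm_num, hΓ2]; norm_num
  · have key := Real.convexOn_log_Gamma.slope_mono_adjacent
      (show (x + 1 : ℝ) ∈ Set.Ioi (0:ℝ) by simp; linarith)
      (show (3:ℝ) ∈ Set.Ioi (0:ℝ) by norm_num)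
      (show x + 1 < 2 by linarith)
      (show (2:ℝ) < 3 by norm_num)
    simp only [Function.comp, hΓ2, hΓ3, Real.log_one] at key
    have hΓx : 0 < Real.Gamma (x + 1) := Real.Gamma_pos_of_pos (by linarith)
    have h2 : (0:ℝ) < 2 - (x+1) := by linarith
    rw [div_le_div_iff₀ h2 (by norm_num)] at key
    have key2 : -Real.log 2 ≤ Real.log (Real.Gamma (x + 1)) := by
      have hl2 : (0:ℝ) ≤ Real.log 2 := Real.log_nonneg (by norm_num)
      nlinarith [key]
    have := Real.exp_le_exp.2 key2
    rw [Real.exp_log hΓx, Real.exp_neg, Real.exp_log (by norm_num)] at this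
    linarith [this]

/-- Stirling lower bound: √(2πn)·(n/e)^n ≤ n!. -/
lemma stirling_lb (n : ℕ) (hn : 1 ≤ n) :
    Real.sqrt (2 * Real.pi * n) * ((n : ℝ) / Real.exp 1) ^ n ≤ n.factorial := by
  obtain ⟨k, rfl⟩ := Nat.exists_eq_add_of_le hn
  have h1 : Real.sqrt Real.pi ≤ Stirling.stirlingSeq (1 + k) := by
    have := Stirling.stirlingSeq'_antitone.le_of_tendsto
      (Stirling.tendsto_stirlingSeq_sqrt_pi.comp (tendsto_add_atTop_nat 1)) k
    simpa [Function.comp, Nat.succ_eq_add_one, add_comm] using this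
  set m := 1 + k with hm
  have hm0 : (0:ℝ) < m := by positivity
  have hss : Stirling.stirlingSeq m
      = m.factorial / (Real.sqrt (2 * m) * ((m:ℝ) / Real.exp 1) ^ m) := rfl
  have hden : (0:ℝ) < Real.sqrt (2 * m) * ((m:ℝ) / Real.exp 1) ^ m := by positivity
  rw [hss, le_div_iff₀ hden] at h1
  calc Real.sqrt (2 * Real.pi * m) * ((m:ℝ) / Real.exp 1) ^ m
      = Real.sqrt Real.pi * (Real.sqrt (2 * m) * ((m:ℝ) / Real.exp 1) ^ m) := by
        rw [show 2 * Real.pi * (m:ℝ) = Real.pi * (2 * m) by ring,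
          Real.sqrt_mul Real.pi_pos.le]
        ring
    _ ≤ m.factorial := h1

/-- u(1 - ln u) ≤ 1 for u > 0. -/
lemma ulog_le_one {u : ℝ} (hu : 0 < u) : u * (1 - Real.log u) ≤ 1 := by
  have := Real.one_sub_inv_le_log_of_pos hu
  have hui : u * u⁻¹ = 1 := mul_inv_cancel₀ (ne_of_gt hu)
  nlinarith

/-- u(1 - ln u) is monotone on (0, 1]. -/
lemma ulog_mono {a b : ℝ} (ha : 0 < a) (hab : a ≤ b) (hb : b ≤ 1) :
    a * (1 - Real.log a) ≤ b * (1 - Real.log b) := by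
  have hb0 : 0 < b := lt_of_lt_of_le ha hab
  have h1 : 1 - (a / b)⁻¹ ≤ Real.log (a / b) := Real.one_sub_inv_le_log_of_pos (by positivity)
  rw [Real.log_div (ne_of_gt ha) (ne_of_gt hb0)] at h1
  have h2 : a * (1 - b / a) ≤ a * (Real.log a - Real.log b) := by
    have : (a / b)⁻¹ = b / a := by field_simp
    rw [this] at h1
    nlinarith
  have h3 : a * (1 - b/a) = a - b := by field_simp
  have hlb : Real.log b ≤ 0 := Real.log_nonpos hb0.le hb
  nlinarith

/-- basic reduction: s^n/n! ≤ exp(s·u(1-log u))/√(2πn) with u = n/s. -/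
lemma pow_div_factorial_le {s : ℝ} (hs : 0 < s) {n : ℕ} (hn : 1 ≤ n) :
    s ^ n / (n.factorial : ℝ)
      ≤ Real.exp (s * ((n / s) * (1 - Real.log (n / s)))) / Real.sqrt (2 * Real.pi * n) := by
  have hn0 : (0:ℝ) < n := by exact_mod_cast hn
  have hfac : (0:ℝ) < n.factorial := by exact_mod_cast n.factorial_pos
  have hsq : (0:ℝ) < Real.sqrt (2 * Real.pi * n) := by positivity
  have key : s ^ n / (n.factorial : ℝ)
      ≤ s ^ n / (Real.sqrt (2 * Real.pi * n) * ((n : ℝ) / Real.exp 1) ^ n) := by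
    apply div_le_div_of_nonneg_left (by positivity) (by positivity) (stirling_lb n hn)
  refine key.trans (le_of_eq ?_)
  have e1 : s ^ n / (((n:ℝ) / Real.exp 1) ^ n) = Real.exp (s * ((n / s) * (1 - Real.log (n / s)))) := by
    rw [← div_pow]
    have hb : (0:ℝ) < s / ((n:ℝ) / Real.exp 1) := by positivity
    rw [← Real.exp_log (pow_pos hb n), Real.log_pow]
    congr 1
    have : Real.log (s / ((n:ℝ) / Real.exp 1)) = Real.log s - Real.log n + 1 := by
      rw [Real.log_div (ne_of_gt hs) (by positivity), Real.log_div (ne_of_gt hn0) (by positivity),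
        Real.log_exp]
      ring
    rw [this]
    have : Real.log ((n:ℝ) / s) = Real.log n - Real.log s := Real.log_div (ne_of_gt hn0) (ne_of_gt hs)
    rw [this]
    have e2 : s * ((n:ℝ)/s * (1 - (Real.log n - Real.log s))) = n * (1 - (Real.log n - Real.log s)) := by
      field_simp
    rw [e2]
    ring
  rw [mul_comm, ← div_div, e1]

lemma term_le_a {s : ℝ} (hs : 2 ≤ s) {n : ℕ} (hn : 1 ≤ n) (h2 : (2 * n : ℝ) ≤ s) :
    s ^ n / (n.factorial : ℝ) ≤ Real.exp (9 / 10 * s) := by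
  have hs0 : (0:ℝ) < s := by linarith
  have hn0 : (0:ℝ) < n := by exact_mod_cast hn
  refine (pow_div_factorial_le hs0 hn).trans ?_
  have hsq : (1:ℝ) ≤ Real.sqrt (2 * Real.pi * n) := by
    rw [show (1:ℝ) = Real.sqrt 1 by simp]
    apply Real.sqrt_le_sqrt
    have hn1 : (1:ℝ) ≤ n := by exact_mod_cast hn
    nlinarith [Real.pi_gt_three]
  have harg : s * ((n / s) * (1 - Real.log (n / s))) ≤ 9 / 10 * s := by
    have hu : (0:ℝ) < n / s := by positivity
    have hub : (n:ℝ) / s ≤ 1/2 := by rw [div_le_div_iff₀ hs0 (by norm_num)]; linarith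
    have := ulog_mono hu hub (by norm_num)
    have hlog : Real.log ((1:ℝ)/2) = -Real.log 2 := by
      rw [one_div, Real.log_inv]
    have hl2 : Real.log 2 < 0.6931471808 := Real.log_two_lt_d9
    have h12 : (1:ℝ)/2 * (1 - Real.log (1/2)) ≤ 9/10 := by rw [hlog]; nlinarith
    have : (n / s) * (1 - Real.log (n / s)) ≤ 9/10 := this.trans h12
    nlinarith
  calc Real.exp (s * ((n / s) * (1 - Real.log (n / s)))) / Real.sqrt (2 * Real.pi * n)
      ≤ Real.exp (s * ((n / s) * (1 - Real.log (n / s)))) / 1 := by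
        apply div_le_div_of_nonneg_left (by positivity) (by norm_num) hsq
    _ ≤ Real.exp (9/10 * s) := by rw [div_one]; exact Real.exp_le_exp.2 harg

lemma term_le_b {s : ℝ} (hs : 2 ≤ s) {n : ℕ} (hn : 1 ≤ n) (h2 : s ≤ (2 * n : ℝ)) :
    s ^ n / (n.factorial : ℝ) ≤ Real.exp s / Real.sqrt s := by
  have hs0 : (0:ℝ) < s := by linarith
  have hn0 : (0:ℝ) < n := by exact_mod_cast hn
  refine (pow_div_factorial_le hs0 hn).trans ?_
  have hsq : Real.sqrt s ≤ Real.sqrt (2 * Real.pi * n) := by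
    apply Real.sqrt_le_sqrt
    nlinarith [Real.pi_gt_three]
  have harg : s * ((n / s) * (1 - Real.log (n / s))) ≤ s := by
    have hu : (0:ℝ) < n / s := by positivity
    have := ulog_le_one hu
    nlinarith
  exact div_le_div₀ (Real.exp_pos _).le (Real.exp_le_exp.2 harg) (Real.sqrt_pos.2 hs0) hsq

lemma hh_nonneg {s : ℝ} (hs : 0 < s) {x : ℝ} (hx : 0 ≤ x) : 0 ≤ hh s x := by
  unfold hh
  have := Real.Gamma_pos_of_pos (show (0:ℝ) < x + 1 by linarith)
  positivity

lemma hh_le_Mb {s : ℝ} (hs : 2 ≤ s) {x : ℝ} (hx : 0 ≤ x) : hh s x ≤ Mb s := by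
  have hs0 : (0:ℝ) < s := by linarith
  have hs1 : (1:ℝ) ≤ s := by linarith
  have hΓ : (0:ℝ) < Real.Gamma (x + 1) := Real.Gamma_pos_of_pos (by linarith)
  have hMb2 : 0 ≤ s * Real.exp (9/10*s) := by positivity
  have hMb3 : 0 ≤ 2 * Real.exp s / Real.sqrt s := by positivity
  have hMb1 : 0 ≤ 2 * s := by linarith
  set n := ⌊x⌋₊ with hn
  have hnx : (n : ℝ) ≤ x := Nat.floor_le hx
  have hxn : x < n + 1 := Nat.lt_floor_add_one x
  rcases Nat.eq_zero_or_pos n with h0 | h1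
  · -- x ∈ [0,1)
    have hx1 : x ≤ 1 := by
      have := hxn; rw [h0] at this; push_cast at this; linarith
    have hb : hh s x ≤ 2 * s := by
      unfold hh
      have h1 : s ^ x ≤ s ^ (1:ℝ) := Real.rpow_le_rpow_of_exponent_le hs1 hx1
      rw [Real.rpow_one] at h1
      calc s ^ x / Real.Gamma (x + 1) ≤ s / (1/2) := by
            apply div_le_div₀ (by linarith) h1 (by norm_num) (gamma_lb_01 hx hx1)
        _ = 2 * s := by ring
    unfold Mb; linarith
  · -- n ≥ 1
    have hn0 : (0:ℝ) < n := by exact_mod_cast h1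
    have hfac : (0:ℝ) < n.factorial := by exact_mod_cast n.factorial_pos
    rcases le_or_gt (2 * (n:ℝ)) s with hc | hc
    · -- monotone-ish region: crude bound s^(n+1)/n!
      have hΓn : (n.factorial : ℝ) ≤ Real.Gamma (x + 1) := by
        have := gamma_lb_interval h1 hnx hxn.le
        have hone : (1:ℝ) ≤ (n:ℝ) ^ (x - n) :=
          Real.one_le_rpow (by exact_mod_cast h1) (by linarith)
        nlinarith
      have hb : hh s x ≤ s * (s ^ n / n.factorial) := by
        unfold hh
        have hsx : s ^ x ≤ s ^ ((n:ℝ) + 1) := Real.rpow_le_rpow_of_exponent_le hs1 (by linarith)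
        have : s ^ ((n:ℝ)+1) = s * s ^ n := by
          rw [show ((n:ℝ)+1) = ((n+1:ℕ):ℝ) by push_cast; ring, Real.rpow_natCast, pow_succ]
          ring
        rw [this] at hsx
        calc s ^ x / Real.Gamma (x+1) ≤ (s * s ^ n) / n.factorial :=
              div_le_div₀ (by positivity) hsx hfac hΓn
          _ = s * (s ^ n / n.factorial) := by ring
      have := term_le_a hs h1 hc
      have : hh s x ≤ s * Real.exp (9/10 * s) := by nlinarith
      unfold Mb; linarith
    · -- antitone-ish region
      have hΓn : (n.factorial : ℝ) * (n:ℝ) ^ (x - n) ≤ Real.Gamma (x + 1) :=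
        gamma_lb_interval h1 hnx hxn.le
      have hb : hh s x ≤ 2 * (s ^ n / n.factorial) := by
        unfold hh
        have hsplit : s ^ x = s ^ (n:ℕ) * s ^ (x - n) := by
          rw [← Real.rpow_natCast s n, ← Real.rpow_add hs0]
          congr 1; ring
        have hratio : s ^ (x - n) ≤ 2 * (n:ℝ) ^ (x - n) := by
          have hd0 : 0 ≤ x - n := by linarith
          have hd1 : x - n ≤ 1 := by linarith
          have hdiv : (s / n) ^ (x - n) ≤ 2 := by
            rcases le_or_gt 1 (s / (n:ℝ)) with hr | hr
            · have : (s / (n:ℝ)) ^ (x - n) ≤ (s / (n:ℝ)) ^ (1:ℝ) :=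
                Real.rpow_le_rpow_of_exponent_le hr hd1
              rw [Real.rpow_one] at this
              have : (s / (n:ℝ)) ≤ 2 := by rw [div_le_iff₀ hn0]; linarith
              calc (s / (n:ℝ)) ^ (x - n) ≤ (s / (n:ℝ)) ^ (1:ℝ) := by
                    exact Real.rpow_le_rpow_of_exponent_le hr hd1
                _ ≤ 2 := by rw [Real.rpow_one]; exact this
            · have : (s / (n:ℝ)) ^ (x - n) ≤ 1 :=
                Real.rpow_le_one (by positivity) hr.le hd0
              linarith
          have := Real.div_rpow hs0.le (le_of_lt hn0) (z := x - n)
          rw [this] at hdiv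
          have hnp : (0:ℝ) < (n:ℝ) ^ (x - n) := Real.rpow_pos_of_pos hn0 _
          rw [div_le_iff₀ hnp] at hdiv
          linarith
        calc s ^ x / Real.Gamma (x + 1)
            ≤ (s ^ (n:ℕ) * (2 * (n:ℝ) ^ (x - n))) / ((n.factorial : ℝ) * (n:ℝ) ^ (x - n)) := by
              apply div_le_div₀ (by positivity) _ (by positivity) hΓn
              rw [hsplit]
              have hp : (0:ℝ) ≤ s ^ (n:ℕ) := by positivity
              nlinarith [Real.rpow_pos_of_pos hs0 (x - n), hratio]
          _ = 2 * (s ^ n / n.factorial) := by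
              have hnp : (0:ℝ) < (n:ℝ) ^ (x - n) := Real.rpow_pos_of_pos hn0 _
              field_simp
      have := term_le_b hs h1 hc.le
      have : hh s x ≤ 2 * (Real.exp s / Real.sqrt s) := by nlinarith
      have heq : 2 * (Real.exp s / Real.sqrt s) = 2 * Real.exp s / Real.sqrt s := by ring
      unfold Mb; linarith [this]

lemma hh_eq_exp {s : ℝ} (hs : 0 < s) {x : ℝ} (hx : 0 ≤ x) :
    hh s x = Real.exp (x * Real.log s - Real.log (Real.Gamma (x + 1))) := by
  have hΓ : (0:ℝ) < Real.Gamma (x + 1) := Real.Gamma_pos_of_pos (by linarith)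
  rw [hh, Real.exp_sub, Real.exp_log hΓ, Real.rpow_def_of_pos hs, mul_comm]

lemma concave_ell (s : ℝ) :
    ConcaveOn ℝ (Ici 0) (fun x => x * Real.log s - Real.log (Real.Gamma (x + 1))) := by
  have h1 : ConcaveOn ℝ (Ici (0:ℝ)) (fun x : ℝ => x * Real.log s) := by
    refine ⟨convex_Ici 0, fun x _ y _ a b _ _ hab => le_of_eq ?_⟩
    simp only [smul_eq_mul]
    ring
  have h2 : ConvexOn ℝ (Ici (0:ℝ)) (fun x : ℝ => Real.log (Real.Gamma (x + 1))) := by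
    refine ⟨convex_Ici 0, fun x hx y hy a b ha hb hab => ?_⟩
    have hx1 : (x + 1 : ℝ) ∈ Ioi (0:ℝ) := by simp at hx ⊢; linarith
    have hy1 : (y + 1 : ℝ) ∈ Ioi (0:ℝ) := by simp at hy ⊢; linarith
    have := Real.convexOn_log_Gamma.2 hx1 hy1 ha hb hab
    simp only [Function.comp, smul_eq_mul] at this ⊢
    have e : a * (x + 1) + b * (y + 1) = a * x + b * y + 1 := by
      have : a + b = 1 := hab; nlinarith
    rw [e] at this
    exact this
  exact h1.sub h2

lemma hh_quasiconcave {s : ℝ} (hs : 0 < s) {x y z : ℝ} (hx : 0 ≤ x) (hxy : x ≤ y) (hyz : y ≤ z) :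
    min (hh s x) (hh s z) ≤ hh s y := by
  have hy : 0 ≤ y := le_trans hx hxy
  have hz : 0 ≤ z := le_trans hy hyz
  have hseg : y ∈ segment ℝ x z := by
    rw [segment_eq_Icc (le_trans hxy hyz)]
    exact ⟨hxy, hyz⟩
  have := (concave_ell s).ge_on_segment (mem_Ici.2 hx) (mem_Ici.2 hz) hseg
  rw [hh_eq_exp hs hx, hh_eq_exp hs hy, hh_eq_exp hs hz]
  calc min (Real.exp _) (Real.exp _)
      = Real.exp (min (x * Real.log s - Real.log (Real.Gamma (x+1)))
          (z * Real.log s - Real.log (Real.Gamma (z+1)))) :=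
        (Real.exp_monotone.map_min).symm
    _ ≤ _ := Real.exp_le_exp.2 this

lemma hh_continuousOn {s : ℝ} (hs : 0 < s) : ContinuousOn (hh s) (Ici 0) := by
  have h1 : ContinuousOn (fun x : ℝ => s ^ x) (Ici 0) := by
    have he : (fun x : ℝ => s ^ x) = fun x => Real.exp (Real.log s * x) := by
      funext x; rw [Real.rpow_def_of_pos hs]
    rw [he]
    exact (Real.continuous_exp.comp (continuous_const.mul continuous_id)).continuousOn
  have h2 : ContinuousOn (fun x : ℝ => Real.Gamma (x + 1)) (Ici 0) := by
    intro x hx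
    simp only [mem_Ici] at hx
    have hf : ContinuousAt (fun y : ℝ => y + 1) x := by fun_prop
    have hc : ContinuousAt Real.Gamma (x + 1) := by
      apply DifferentiableAt.continuousAt (𝕜 := ℝ)
      apply Real.differentiableAt_Gamma
      intro m hcon
      have hpos : (0:ℝ) < x + 1 := by linarith
      rw [hcon] at hpos
      have : (0:ℝ) ≤ (m:ℝ) := Nat.cast_nonneg m
      linarith
    exact (ContinuousAt.comp (g := Real.Gamma) (f := fun y : ℝ => y + 1) hc hf).continuousWithinAt
  exact h1.div h2 fun x hx => ne_of_gt (Real.Gamma_pos_of_pos (by simp at hx; linarith))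

lemma hh_zero {s : ℝ} (hs : 0 < s) : hh s 0 = 1 := by
  simp [hh, Real.rpow_zero, zero_add, Real.Gamma_one]

/-- Existence of the peak. -/
lemma exists_peak {s : ℝ} (hs : 2 ≤ s) :
    ∃ m : ℝ, 0 ≤ m ∧ MonotoneOn (hh s) (Icc 0 m) ∧ AntitoneOn (hh s) (Ici m) := by
  have hs0 : (0:ℝ) < s := by linarith
  -- find T beyond which hh < 1
  obtain ⟨N, hN⟩ := Metric.tendsto_atTop.1
    ((Real.summable_pow_div_factorial s).tendsto_atTop_zero) (1/4) (by norm_num)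
  set T : ℝ := max (N + 1 : ℕ) (s + 1) with hT
  have hT0 : 0 ≤ T := le_trans (by positivity) (le_max_right _ _)
  have hsmall : ∀ x : ℝ, T ≤ x → hh s x < 1 := by
    intro x hxT
    have hx0 : (0:ℝ) ≤ x := le_trans hT0 hxT
    set n := ⌊x⌋₊ with hn
    have hnx : (n:ℝ) ≤ x := Nat.floor_le hx0
    have hxn : x < n + 1 := Nat.lt_floor_add_one x
    have hxN : ((N:ℝ) + 1) ≤ x := le_trans (by exact_mod_cast le_max_left _ _) hxT
    have hxs : s + 1 ≤ x := le_trans (le_max_right _ _) hxT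
    have hnN : N ≤ n := by
      have : (N:ℝ) ≤ n := by linarith
      exact_mod_cast this
    have hn1 : 1 ≤ n := by
      have : (1:ℝ) ≤ n := by linarith
      exact_mod_cast this
    have hns : s ≤ 2 * (n:ℝ) := by linarith
    -- hh s x ≤ 2 * s^n/n!
    have hΓn : (n.factorial : ℝ) * (n:ℝ) ^ (x - n) ≤ Real.Gamma (x + 1) :=
      gamma_lb_interval hn1 hnx hxn.le
    have hn0 : (0:ℝ) < n := by exact_mod_cast hn1
    have hfac : (0:ℝ) < n.factorial := by exact_mod_cast n.factorial_pos
    have hb : hh s x ≤ 2 * (s ^ n / n.factorial) := by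
      unfold hh
      have hsplit : s ^ x = s ^ (n:ℕ) * s ^ (x - n) := by
        rw [← Real.rpow_natCast s n, ← Real.rpow_add hs0]
        congr 1; ring
      have hratio : s ^ (x - n) ≤ 2 * (n:ℝ) ^ (x - n) := by
        have hd0 : 0 ≤ x - n := by linarith
        have hd1 : x - n ≤ 1 := by linarith
        have hdiv : (s / n) ^ (x - n) ≤ 2 := by
          rcases le_or_gt 1 (s / (n:ℝ)) with hr | hr
          · have h2' : (s / (n:ℝ)) ≤ 2 := by rw [div_le_iff₀ hn0]; linarith
            calc (s / (n:ℝ)) ^ (x - n) ≤ (s / (n:ℝ)) ^ (1:ℝ) :=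
                  Real.rpow_le_rpow_of_exponent_le hr hd1
              _ ≤ 2 := by rw [Real.rpow_one]; exact h2'
          · have : (s / (n:ℝ)) ^ (x - n) ≤ 1 :=
              Real.rpow_le_one (by positivity) hr.le hd0
            linarith
        rw [Real.div_rpow hs0.le (le_of_lt hn0)] at hdiv
        have hnp : (0:ℝ) < (n:ℝ) ^ (x - n) := Real.rpow_pos_of_pos hn0 _
        rw [div_le_iff₀ hnp] at hdiv
        linarith
      calc s ^ x / Real.Gamma (x + 1)
          ≤ (s ^ (n:ℕ) * (2 * (n:ℝ) ^ (x - n))) / ((n.factorial : ℝ) * (n:ℝ) ^ (x - n)) := by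
            apply div_le_div₀ (by positivity) _ (by positivity) hΓn
            rw [hsplit]
            have hp : (0:ℝ) ≤ s ^ (n:ℕ) := by positivity
            nlinarith [Real.rpow_pos_of_pos hs0 (x - n), hratio]
        _ = 2 * (s ^ n / n.factorial) := by
            have hnp : (0:ℝ) < (n:ℝ) ^ (x - n) := Real.rpow_pos_of_pos hn0 _
            field_simp
    have := hN n hnN
    rw [Real.dist_eq, sub_zero] at this
    have habs : s ^ n / (n.factorial : ℝ) < 1/4 := lt_of_abs_lt this
    linarith
  -- max on [0, T]
  obtain ⟨m, hmmem, hmax⟩ := (isCompact_Icc (a := (0:ℝ)) (b := T)).exists_isMaxOn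
    (Set.nonempty_Icc.2 hT0) ((hh_continuousOn hs0).mono (Icc_subset_Ici_self))
  obtain ⟨hm0, hmT⟩ := hmmem
  have hglobal : ∀ x : ℝ, 0 ≤ x → hh s x ≤ hh s m := by
    intro x hx
    rcases le_or_gt x T with hxT | hxT
    · exact hmax ⟨hx, hxT⟩
    · have h1 : hh s x < 1 := hsmall x hxT.le
      have h0 : hh s 0 = 1 := hh_zero hs0
      have h3 : hh s 0 ≤ hh s m := hmax ⟨le_refl 0, hT0⟩
      rw [h0] at h3
      linarith
  refine ⟨m, hm0, ?_, ?_⟩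
  · intro x hx y hy hxy
    have hq := hh_quasiconcave hs0 hx.1 hxy hy.2
    have hxm : hh s x ≤ hh s m := hglobal x hx.1
    rw [min_eq_left hxm] at hq
    exact hq
  · intro x hx y hy hxy
    have hq := hh_quasiconcave hs0 hm0 (mem_Ici.1 hx) hxy
    have hym : hh s y ≤ hh s m := hglobal y (le_trans hm0 (le_trans hx hxy))
    rw [min_eq_right hym] at hq
    exact hq

lemma union_cells {δ : ℝ} (hδ : 0 < δ) :
    (⋃ n : ℕ, Ico (δ * (n:ℝ)) (δ * ((n:ℝ) + 1))) = Ici (0:ℝ) := by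
  ext x
  simp only [mem_iUnion, mem_Ico, mem_Ici]
  constructor
  · rintro ⟨n, h1, _⟩
    have : (0:ℝ) ≤ δ * n := by positivity
    linarith
  · intro hx
    have hd : 0 ≤ x / δ := by positivity
    refine ⟨⌊x / δ⌋₊, ?_, ?_⟩
    · have h1 : (⌊x/δ⌋₊ : ℝ) ≤ x / δ := Nat.floor_le hd
      calc δ * (⌊x/δ⌋₊ : ℝ) ≤ δ * (x/δ) := by
            exact mul_le_mul_of_nonneg_left h1 hδ.le
        _ = x := by field_simp
    · have h2 : x / δ < ⌊x/δ⌋₊ + 1 := Nat.lt_floor_add_one (x/δ)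
      calc x = δ * (x/δ) := by field_simp
        _ < δ * ((⌊x/δ⌋₊ : ℝ) + 1) := by exact mul_lt_mul_of_pos_left h2 hδ

lemma disj_cells {δ : ℝ} (hδ : 0 < δ) :
    Pairwise (Function.onFun Disjoint fun n : ℕ => Ico (δ * (n:ℝ)) (δ * ((n:ℝ) + 1))) := by
  have key : ∀ i j : ℕ, i < j →
      Disjoint (Ico (δ*(i:ℝ)) (δ*((i:ℝ)+1))) (Ico (δ*(j:ℝ)) (δ*((j:ℝ)+1))) := by
    intro i j h
    rw [Set.Ico_disjoint_Ico]
    have hij1 : (i:ℝ) + 1 ≤ j := by exact_mod_cast h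
    calc min (δ*((i:ℝ)+1)) (δ*((j:ℝ)+1)) ≤ δ*((i:ℝ)+1) := min_le_left _ _
      _ ≤ δ * (j:ℝ) := by nlinarith
      _ ≤ max (δ*(i:ℝ)) (δ*(j:ℝ)) := le_max_right _ _
  intro i j hij
  rcases lt_or_gt_of_ne hij with h | h
  · exact key i j h
  · exact (key j i h).symm

lemma riemann {g : ℝ → ℝ} {δ m M : ℝ} (hδ : 0 < δ) (hm : 0 ≤ m) (hM : 0 ≤ M)
    (h0 : ∀ x, 0 ≤ x → 0 ≤ g x)
    (hmono : MonotoneOn g (Icc 0 m)) (hanti : AntitoneOn g (Ici m))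
    (hb : ∀ x, 0 ≤ x → g x ≤ M)
    (hint : IntegrableOn g (Ici 0)) :
    Summable (fun n : ℕ => g (δ * n)) ∧
      |δ * (∑' n : ℕ, g (δ * n)) - ∫ x in Ici 0, g x| ≤ 2 * (δ * M) := by
  set a : ℕ → ℝ := fun n => g (δ * n) with ha
  set c : ℕ → ℝ := fun n => ∫ x in Ico (δ*(n:ℝ)) (δ*((n:ℝ)+1)), g x with hc
  have hmeas : ∀ n : ℕ, MeasurableSet (Ico (δ*(n:ℝ)) (δ*((n:ℝ)+1))) := fun n => measurableSet_Ico
  have hintU : IntegrableOn g (⋃ n : ℕ, Ico (δ*(n:ℝ)) (δ*((n:ℝ)+1))) := by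
    rw [union_cells hδ]; exact hint
  have hhs : HasSum c (∫ x in Ici 0, g x) := by
    have := hasSum_integral_iUnion hmeas (disj_cells hδ) hintU
    rwa [union_cells hδ] at this
  have hcell : ∀ n : ℕ, IntegrableOn g (Ico (δ*(n:ℝ)) (δ*((n:ℝ)+1))) := by
    intro n
    apply hint.mono_set
    intro x hx
    have : (0:ℝ) ≤ δ * n := by positivity
    exact le_trans this hx.1
  have hvol : ∀ n : ℕ, (volume (Ico (δ*(n:ℝ)) (δ*((n:ℝ)+1)))).toReal = δ := by
    intro n
    rw [Real.volume_Ico, show δ*((n:ℝ)+1) - δ*n = δ by ring, ENNReal.toReal_ofReal hδ.le]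
  have hfin : ∀ n : ℕ, volume (Ico (δ*(n:ℝ)) (δ*((n:ℝ)+1))) < ⊤ := by
    intro n; rw [Real.volume_Ico]; exact ENNReal.ofReal_lt_top
  have hlow : ∀ (n : ℕ) (lo : ℝ), (∀ x ∈ Ico (δ*(n:ℝ)) (δ*((n:ℝ)+1)), lo ≤ g x) → δ * lo ≤ c n := by
    intro n lo hlo
    have h1 : ∫ _ in Ico (δ*(n:ℝ)) (δ*((n:ℝ)+1)), lo ≤ c n :=
      setIntegral_mono_on (integrableOn_const (hfin n).ne) (hcell n) (hmeas n) hlo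
    rwa [setIntegral_const, measureReal_def, hvol n, smul_eq_mul] at h1
  have hup : ∀ (n : ℕ) (hi : ℝ), (∀ x ∈ Ico (δ*(n:ℝ)) (δ*((n:ℝ)+1)), g x ≤ hi) → c n ≤ δ * hi := by
    intro n hi hhi
    have h1 : c n ≤ ∫ _ in Ico (δ*(n:ℝ)) (δ*((n:ℝ)+1)), hi :=
      setIntegral_mono_on (hcell n) (integrableOn_const (hfin n).ne) (hmeas n) hhi
    rwa [setIntegral_const, measureReal_def, hvol n, smul_eq_mul] at h1
  have hcellpos : ∀ (n : ℕ) (x : ℝ), x ∈ Ico (δ*(n:ℝ)) (δ*((n:ℝ)+1)) → 0 ≤ x := by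
    intro n x hx
    have : (0:ℝ) ≤ δ * n := by positivity
    linarith [hx.1]
  set K := ⌊m / δ⌋₊ with hK
  have hKle : δ * (K:ℝ) ≤ m := by
    have := Nat.floor_le (show 0 ≤ m / δ by positivity)
    calc δ * (K:ℝ) ≤ δ * (m/δ) := mul_le_mul_of_nonneg_left this hδ.le
      _ = m := by field_simp
  have hKgt : m < δ * ((K:ℝ) + 1) := by
    have := Nat.lt_floor_add_one (m/δ)
    calc m = δ * (m/δ) := by field_simp
      _ < δ * ((K:ℝ)+1) := mul_lt_mul_of_pos_left this hδ
  -- cell bounds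
  have hmc_low : ∀ n : ℕ, n < K → δ * a n ≤ c n := by
    intro n hn
    apply hlow
    intro x hx
    have hn1K : (n:ℝ) + 1 ≤ K := by exact_mod_cast hn
    have hxm : x ≤ m := by nlinarith [hx.2, hδ.le]
    exact hmono ⟨by positivity, by nlinarith [hx.1]⟩ ⟨hcellpos n x hx, hxm⟩ hx.1
  have hmc_up : ∀ n : ℕ, n < K → c n ≤ δ * a (n+1) := by
    intro n hn
    apply hup
    intro x hx
    have hn1K : (n:ℝ) + 1 ≤ K := by exact_mod_cast hn
    have he : ((n+1:ℕ):ℝ) = (n:ℝ) + 1 := by push_cast; ring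
    have hxm : x ≤ m := by nlinarith [hx.2, hδ.le]
    have hend : δ * ((n:ℝ)+1) ≤ m := by nlinarith
    have := hmono ⟨hcellpos n x hx, hxm⟩ ⟨by positivity, hend⟩ hx.2.le
    simpa [ha, he] using this
  have hac_low : ∀ n : ℕ, K < n → δ * a (n+1) ≤ c n := by
    intro n hn
    apply hlow
    intro x hx
    have hKn : (K:ℝ) + 1 ≤ n := by exact_mod_cast hn
    have hxm : m ≤ x := by nlinarith [hx.1]
    have he : ((n+1:ℕ):ℝ) = (n:ℝ) + 1 := by push_cast; ring
    have hend : m ≤ δ * ((n:ℝ)+1) := by nlinarith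
    have := hanti (mem_Ici.2 hxm) (mem_Ici.2 hend) hx.2.le
    simpa [ha, he] using this
  have hac_up : ∀ n : ℕ, K < n → c n ≤ δ * a n := by
    intro n hn
    apply hup
    intro x hx
    have hKn : (K:ℝ) + 1 ≤ n := by exact_mod_cast hn
    have hstart : m ≤ δ * (n:ℝ) := by nlinarith
    have hxm : m ≤ x := by nlinarith [hx.1]
    exact hanti (mem_Ici.2 hstart) (mem_Ici.2 hxm) hx.1
  have hc0 : ∀ n : ℕ, 0 ≤ c n := by
    intro n
    have := hlow n 0 (fun x hx => h0 x (hcellpos n x hx))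
    simpa using this
  have hcM : ∀ n : ℕ, c n ≤ δ * M := fun n => hup n M (fun x hx => hb x (hcellpos n x hx))
  have ha0 : ∀ n : ℕ, 0 ≤ a n := fun n => h0 _ (by positivity)
  have haM : ∀ n : ℕ, a n ≤ M := fun n => hb _ (by positivity)
  have hsumc : Summable c := hhs.summable
  have hI : (∫ x in Ici 0, g x) = ∑' n, c n := hhs.tsum_eq.symm
  -- summability of a
  have hsumc1 : Summable (fun n => c (n + (K+1))) := (summable_nat_add_iff (K+1)).2 hsumc
  have hsa : Summable a := by
    rw [← summable_nat_add_iff (K+2)]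
    apply Summable.of_nonneg_of_le (fun n => ha0 _) (fun n => ?_) (hsumc1.mul_left (1/δ))
    have h1 := hac_low (n + (K+1)) (by omega)
    have he : n + (K+1) + 1 = n + (K+2) := by omega
    rw [he] at h1
    calc a (n + (K+2)) = (1/δ) * (δ * a (n + (K+2))) := by field_simp
      _ ≤ 1/δ * c (n + (K+1)) := by
          apply mul_le_mul_of_nonneg_left h1 (by positivity)
  refine ⟨hsa, ?_⟩
  set S := ∑' n, a n with hS
  -- splits
  have hsplitS2 : (∑ i ∈ Finset.range (K+2), a i) + ∑' n, a (n + (K+2)) = S :=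
    Summable.sum_add_tsum_nat_add (K+2) hsa
  have hsplitS1 : (∑ i ∈ Finset.range 1, a i) + ∑' n, a (n + 1) = S :=
    Summable.sum_add_tsum_nat_add 1 hsa
  have hsplitC : (∑ i ∈ Finset.range (K+1), c i) + ∑' n, c (n + (K+1)) = ∑' n, c n :=
    Summable.sum_add_tsum_nat_add (K+1) hsumc
  have hsa2 : Summable (fun n => a (n + (K+2))) := (summable_nat_add_iff (K+2)).2 hsa
  have hsa1 : Summable (fun n => a (n + 1)) := (summable_nat_add_iff 1).2 hsa
  have hsaK1 : Summable (fun n => a (n + (K+1))) := (summable_nat_add_iff (K+1)).2 hsa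
  -- Upper: δ * S ≤ I + 2δM
  have hup_main : δ * S ≤ (∑' n, c n) + 2 * (δ * M) := by
    have e1 : δ * S = δ * (∑ i ∈ Finset.range (K+2), a i) + δ * ∑' n, a (n + (K+2)) := by
      rw [← hsplitS2]; ring
    have e2 : (∑ i ∈ Finset.range (K+2), a i)
        = (∑ i ∈ Finset.range K, a i) + a K + a (K+1) := by
      rw [Finset.sum_range_succ, Finset.sum_range_succ]
    have h3 : δ * (∑ i ∈ Finset.range K, a i) ≤ ∑ i ∈ Finset.range K, c i := by
      rw [Finset.mul_sum]
      apply Finset.sum_le_sum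
      intro i hi
      exact hmc_low i (Finset.mem_range.1 hi)
    have h4 : δ * ∑' n, a (n + (K+2)) ≤ ∑' n, c (n + (K+1)) := by
      rw [← tsum_mul_left]
      apply Summable.tsum_le_tsum _ (hsa2.mul_left δ) hsumc1
      intro n
      have h1 := hac_low (n + (K+1)) (by omega)
      have he : n + (K+1) + 1 = n + (K+2) := by omega
      rwa [he] at h1
    have h5 : (∑ i ∈ Finset.range K, c i) + ∑' n, c (n + (K+1)) ≤ ∑' n, c n := by
      rw [← hsplitC, Finset.sum_range_succ]
      have := hc0 K
      linarith
    have hbK : δ * a K ≤ δ * M := mul_le_mul_of_nonneg_left (haM K) hδ.le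
    have hbK1 : δ * a (K+1) ≤ δ * M := mul_le_mul_of_nonneg_left (haM (K+1)) hδ.le
    calc δ * S = δ * (∑ i ∈ Finset.range K, a i) + δ * a K + δ * a (K+1)
          + δ * ∑' n, a (n + (K+2)) := by rw [e1, e2]; ring
      _ ≤ (∑ i ∈ Finset.range K, c i) + δ*M + δ*M + ∑' n, c (n + (K+1)) := by
          linarith
      _ ≤ (∑' n, c n) + 2*(δ*M) := by linarith
  -- Lower: I ≤ δ * S + 2δM
  have hlow_main : (∑' n, c n) ≤ δ * S + 2 * (δ * M) := by
    have e1 : (∑' n, c n) = (∑ i ∈ Finset.range K, c i) + c K + ∑' n, c (n + (K+1)) := by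
      rw [← hsplitC, Finset.sum_range_succ]
    have h3 : (∑ i ∈ Finset.range K, c i) ≤ δ * ∑ i ∈ Finset.range K, a (i+1) := by
      rw [Finset.mul_sum]
      apply Finset.sum_le_sum
      intro i hi
      exact hmc_up i (Finset.mem_range.1 hi)
    have h4 : (∑' n, c (n + (K+1))) ≤ δ * ∑' n, a (n + (K+1)) := by
      rw [← tsum_mul_left]
      apply Summable.tsum_le_tsum _ hsumc1 (hsaK1.mul_left δ)
      intro n
      exact hac_up (n + (K+1)) (by omega)
    have h5 : (∑ i ∈ Finset.range K, a (i+1)) + ∑' n, a (n + (K+1)) ≤ S := by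
      have := Summable.sum_add_tsum_nat_add (f := fun n => a (n+1)) K hsa1
      have he : ∀ n : ℕ, a (n + K + 1) = a (n + (K+1)) := fun n => by rw [Nat.add_assoc]
      rw [tsum_congr he] at this
      rw [this]
      rw [← hsplitS1]
      have := ha0 0
      simp only [Finset.sum_range_one]
      linarith
    have hcK : c K ≤ δ * M := hcM K
    have hδS : δ * ((∑ i ∈ Finset.range K, a (i+1)) + ∑' n, a (n + (K+1))) ≤ δ * S :=
      mul_le_mul_of_nonneg_left h5 hδ.le
    calc (∑' n, c n) = (∑ i ∈ Finset.range K, c i) + c K + ∑' n, c (n + (K+1)) := e1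
      _ ≤ δ * (∑ i ∈ Finset.range K, a (i+1)) + δ*M + δ * ∑' n, a (n + (K+1)) := by linarith
      _ = δ * ((∑ i ∈ Finset.range K, a (i+1)) + ∑' n, a (n + (K+1))) + δ*M := by ring
      _ ≤ δ * S + 2*(δ*M) := by
          have hδM : (0:ℝ) ≤ δ * M := by positivity
          linarith
  rw [hI, abs_sub_le_iff]
  constructor <;> linarith

/-- crude cell bound used for integrability. -/
lemma hh_cell_bound {s : ℝ} (hs : 2 ≤ s) (n : ℕ) {x : ℝ} (hx : (n:ℝ) ≤ x) (hx' : x ≤ (n:ℝ) + 1) :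
    hh s x ≤ 2 * s * (s ^ n / n.factorial) := by
  have hs0 : (0:ℝ) < s := by linarith
  have hs1 : (1:ℝ) ≤ s := by linarith
  have hx0 : (0:ℝ) ≤ x := le_trans (Nat.cast_nonneg n) hx
  have hΓ : (0:ℝ) < Real.Gamma (x + 1) := Real.Gamma_pos_of_pos (by linarith)
  rcases Nat.eq_zero_or_pos n with h0 | h1
  · subst h0
    simp only [Nat.cast_zero, zero_add] at hx hx' ⊢
    have hb : hh s x ≤ 2 * s := by
      unfold hh
      have h1 : s ^ x ≤ s ^ (1:ℝ) := Real.rpow_le_rpow_of_exponent_le hs1 hx'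
      rw [Real.rpow_one] at h1
      calc s ^ x / Real.Gamma (x + 1) ≤ s / (1/2) :=
            div_le_div₀ (by linarith) h1 (by norm_num) (gamma_lb_01 hx0 hx')
        _ = 2 * s := by ring
    simpa [Nat.factorial_zero] using hb
  · have hfac : (0:ℝ) < n.factorial := by exact_mod_cast n.factorial_pos
    have hΓn : (n.factorial : ℝ) ≤ Real.Gamma (x + 1) := by
      have := gamma_lb_interval h1 hx hx'
      have hone : (1:ℝ) ≤ (n:ℝ) ^ (x - n) :=
        Real.one_le_rpow (by exact_mod_cast h1) (by linarith)
      nlinarith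
    have hsx : s ^ x ≤ s ^ ((n:ℝ) + 1) := Real.rpow_le_rpow_of_exponent_le hs1 hx'
    have he : s ^ ((n:ℝ)+1) = s * s ^ n := by
      rw [show ((n:ℝ)+1) = ((n+1:ℕ):ℝ) by push_cast; ring, Real.rpow_natCast, pow_succ]
      ring
    rw [he] at hsx
    have hb : hh s x ≤ s * (s ^ n / n.factorial) := by
      unfold hh
      calc s ^ x / Real.Gamma (x+1) ≤ (s * s ^ n) / n.factorial :=
            div_le_div₀ (by positivity) hsx hfac hΓn
        _ = s * (s ^ n / n.factorial) := by ring
    have : 0 ≤ s * (s ^ n / n.factorial) := by positivity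
    nlinarith

lemma hh_integrable {s : ℝ} (hs : 2 ≤ s) : IntegrableOn (hh s) (Ici 0) := by
  have hs0 : (0:ℝ) < s := by linarith
  rw [← union_cells (one_pos : (0:ℝ) < 1)]
  have hcell : ∀ n : ℕ, IntegrableOn (hh s) (Ico (1*(n:ℝ)) (1*((n:ℝ)+1))) := by
    intro n
    apply IntegrableOn.mono_set (t := Icc ((n:ℝ)) ((n:ℝ)+1))
    · apply ContinuousOn.integrableOn_Icc
      apply (hh_continuousOn hs0).mono
      intro x hx
      exact le_trans (Nat.cast_nonneg n) hx.1
    · intro x hx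
      simp only [one_mul] at hx
      exact ⟨hx.1, hx.2.le⟩
  apply integrableOn_iUnion_of_summable_integral_norm hcell
  have hbound : ∀ n : ℕ, (∫ x in Ico (1*(n:ℝ)) (1*((n:ℝ)+1)), ‖hh s x‖)
      ≤ 2 * s * (s ^ n / n.factorial) := by
    intro n
    have hfin : volume (Ico (1*(n:ℝ)) (1*((n:ℝ)+1))) < ⊤ := by
      rw [Real.volume_Ico]; exact ENNReal.ofReal_lt_top
    have h1 : (∫ x in Ico (1*(n:ℝ)) (1*((n:ℝ)+1)), ‖hh s x‖)
        ≤ ∫ _ in Ico (1*(n:ℝ)) (1*((n:ℝ)+1)), (2 * s * (s ^ n / n.factorial)) := by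
      apply setIntegral_mono_on ((hcell n).norm) (integrableOn_const hfin.ne)
        measurableSet_Ico
      intro x hx
      simp only [one_mul] at hx
      have hx0 : (0:ℝ) ≤ x := le_trans (Nat.cast_nonneg n) hx.1
      rw [Real.norm_eq_abs, abs_of_nonneg (hh_nonneg hs0 hx0)]
      exact hh_cell_bound hs n hx.1 hx.2.le
    rw [setIntegral_const, measureReal_def, Real.volume_Ico, show 1*((n:ℝ)+1) - 1*(n:ℝ) = 1 by ring] at h1
    simpa using h1
  apply Summable.of_nonneg_of_le (fun n => ?_) hbound
    (((Real.summable_pow_div_factorial s).mul_left (2*s)))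
  positivity

lemma tsum_one {s : ℝ} (hs : 0 < s) : (∑' n : ℕ, hh s (1 * n)) = Real.exp s := by
  rw [Real.exp_eq_exp_ℝ, NormedSpace.exp_eq_tsum_div]
  apply tsum_congr
  intro n
  rw [hh, one_mul, Real.rpow_natCast, Real.Gamma_nat_eq_factorial]

lemma Mb_exp_tendsto : Tendsto (fun s => Mb s / Real.exp s) atTop (𝓝 0) := by
  have t1 : Tendsto (fun s : ℝ => 2 * (s * Real.exp (-s))) atTop (𝓝 0) := by
    have := (Real.tendsto_pow_mul_exp_neg_atTop_nhds_zero 1).const_mul 2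
    simpa using this
  have t2 : Tendsto (fun s : ℝ => 10 * ((s/10) * Real.exp (-(s/10)))) atTop (𝓝 0) := by
    have hcomp : Tendsto (fun s : ℝ => s / 10) atTop atTop :=
      Tendsto.atTop_div_const (by norm_num) tendsto_id
    have := ((Real.tendsto_pow_mul_exp_neg_atTop_nhds_zero 1).comp hcomp).const_mul 10
    simp only [Function.comp, pow_one, mul_zero] at this
    exact this
  have t3 : Tendsto (fun s : ℝ => 2 / Real.sqrt s) atTop (𝓝 0) := by
    apply Tendsto.div_atTop tendsto_const_nhds
    have h12 : Tendsto (fun s : ℝ => s ^ ((1:ℝ)/2)) atTop atTop := tendsto_rpow_atTop (by norm_num)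
    apply h12.congr'
    filter_upwards [eventually_ge_atTop (0:ℝ)] with s hs
    rw [Real.sqrt_eq_rpow]
  have := (t1.add t2).add t3
  rw [show (0:ℝ) + 0 + 0 = 0 by ring] at this
  apply this.congr'
  filter_upwards [eventually_gt_atTop (0:ℝ)] with s hs
  unfold Mb
  rw [eq_div_iff (Real.exp_ne_zero s)]
  have e1 : Real.exp (-s) * Real.exp s = 1 := by rw [← Real.exp_add]; simp
  have e2 : Real.exp (-(s/10)) * Real.exp s = Real.exp (9/10*s) := by
    rw [← Real.exp_add]; congr 1; ring
  linear_combination (2*s) * e1 + s * e2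

lemma main_tendsto {δ : ℝ} (hδ0 : 0 < δ) :
    Tendsto (fun s => (δ * (∑' n : ℕ, hh s (δ * n)) - Real.exp s) / Real.exp s) atTop (𝓝 0) := by
  have hg : Tendsto (fun s => (2 * (δ + 1) * Mb s) / Real.exp s) atTop (𝓝 0) := by
    have := Mb_exp_tendsto.const_mul (2 * (δ + 1))
    rw [mul_zero] at this
    apply this.congr
    intro s
    ring
  apply squeeze_zero_norm' ?_ hg
  filter_upwards [eventually_ge_atTop (2:ℝ)] with s hs
  have hs0 : (0:ℝ) < s := by linarith
  obtain ⟨m, hm0, hmono, hanti⟩ := exists_peak hs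
  have hMb := Mb_nonneg (le_of_lt hs0)
  have h1 := (riemann hδ0 hm0 hMb (fun x hx => hh_nonneg hs0 hx) hmono hanti
    (fun x hx => hh_le_Mb hs hx) (hh_integrable hs)).2
  have h2 := (riemann one_pos hm0 hMb (fun x hx => hh_nonneg hs0 hx) hmono hanti
    (fun x hx => hh_le_Mb hs hx) (hh_integrable hs)).2
  rw [tsum_one hs0, one_mul] at h2
  have hnum : |δ * (∑' n : ℕ, hh s (δ * n)) - Real.exp s| ≤ 2 * (δ + 1) * Mb s := by
    have := abs_sub (δ * (∑' n : ℕ, hh s (δ * n)) - ∫ x in Ici 0, hh s x)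
      (Real.exp s - ∫ x in Ici 0, hh s x)
    calc |δ * (∑' n : ℕ, hh s (δ * n)) - Real.exp s|
        = |(δ * (∑' n : ℕ, hh s (δ * n)) - ∫ x in Ici 0, hh s x)
            - (Real.exp s - ∫ x in Ici 0, hh s x)| := by ring_nf
      _ ≤ |δ * (∑' n : ℕ, hh s (δ * n)) - ∫ x in Ici 0, hh s x|
            + |Real.exp s - ∫ x in Ici 0, hh s x| := abs_sub _ _
      _ ≤ 2 * (δ * Mb s) + 2 * (1 * Mb s) := add_le_add h1 h2
      _ = 2 * (δ + 1) * Mb s := by ring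
  rw [Real.norm_eq_abs, abs_div, abs_of_pos (Real.exp_pos s)]
  exact (div_le_div_iff_of_pos_right (Real.exp_pos s)).2 hnum


end MLAux

/-- For 0 < α < 1 and λ > 0,
E_α(λ t^α) = (1/α) e^{λ^{1/α} t} + o(e^{λ^{1/α} t}) as t → ∞. -/
theorem stmt_18 (α : ℝ) (hα : 0 < α) (hα1 : α < 1) (lam : ℝ) (hlam : 0 < lam) :
    (fun t : ℝ => mittagLeffler α (lam * t ^ α)
        - (1 / α) * Real.exp (lam ^ (1 / α) * t))
      =o[atTop] fun t : ℝ => Real.exp (lam ^ (1 / α) * t) := by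
  have hαne : α ≠ 0 := ne_of_gt hα
  set p : ℝ := lam ^ (1 / α) with hp
  have hppos : 0 < p := Real.rpow_pos_of_pos hlam _
  -- the key tendsto in s
  have key := MLAux.main_tendsto hα
  have key2 : Filter.Tendsto
      (fun s => ((∑' n : ℕ, MLAux.hh s (α * n)) - (1/α) * Real.exp s) / Real.exp s)
      Filter.atTop (nhds 0) := by
    have := key.const_mul (1/α)
    rw [mul_zero] at this
    apply this.congr
    intro s
    field_simp
  -- compose with t ↦ p * t
  have hcomp : Filter.Tendsto (fun t : ℝ => p * t) Filter.atTop Filter.atTop :=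
    Filter.Tendsto.const_mul_atTop hppos Filter.tendsto_id
  have key3 := key2.comp hcomp
  -- eventual identification with mittagLeffler
  have hev : (fun t : ℝ => (mittagLeffler α (lam * t ^ α)
        - (1 / α) * Real.exp (p * t)) / Real.exp (p * t))
      =ᶠ[Filter.atTop] (fun t =>
        ((∑' n : ℕ, MLAux.hh (p * t) (α * n)) - (1/α) * Real.exp (p * t)) / Real.exp (p * t)) := by
    filter_upwards [Filter.eventually_gt_atTop (0:ℝ)] with t ht
    have hpt : 0 < p * t := by positivity
    have hml : mittagLeffler α (lam * t ^ α) = ∑' n : ℕ, MLAux.hh (p * t) (α * n) := by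
      unfold mittagLeffler MLAux.hh
      apply tsum_congr
      intro n
      congr 1
      -- (lam * t^α)^n = (p*t)^(α*n)
      have h1 : (p * t) ^ (α * (n:ℝ)) = ((p * t) ^ α) ^ (n:ℕ) := by
        rw [Real.rpow_mul hpt.le, Real.rpow_natCast]
      have h2 : (p * t) ^ α = lam * t ^ α := by
        rw [Real.mul_rpow (Real.rpow_pos_of_pos hlam _).le ht.le,
          ← Real.rpow_mul hlam.le, one_div_mul_cancel hαne, Real.rpow_one]
      rw [h1, h2]
    rw [hml]
  have key4 : Filter.Tendsto (fun t : ℝ => (mittagLeffler α (lam * t ^ α)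
        - (1 / α) * Real.exp (p * t)) / Real.exp (p * t)) Filter.atTop (nhds 0) := by
    apply Filter.Tendsto.congr' hev.symm
    exact key3
  rw [Asymptotics.isLittleO_iff_tendsto (fun x hx => absurd hx (Real.exp_ne_zero _))]
  exact key4
end
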